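/- arXiv:2405.13258 — 6 statements merged into one kernel-verified Lean document; each statement's English description precedes it below -/
import Mathlib

section
/- Under the same hypotheses as in the previous statement (h_α(x) = h_Γ(x) + c x⁵ + o(x⁵), h_Γ(x) ≃ x²/2, ζ(x) = x - c x⁴ + O(x⁵)), one has h_α'(ζ(x)) = h_Γ'(x) + 4 c x⁴ (1 + o(1)) as x → 0. -/
open Filter Topology Asymptotics Set
open scoped Nat

/-- One-sided Peano form of Taylor's theorem at `0`. -/
private theorem peano_taylor : ∀ (n : ℕ) (f : ℝ → ℝ), ContDiffAt ℝ n f 0 →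
    (fun x => f x - ∑ k ∈ Finset.range (n + 1), iteratedDeriv k f 0 / k ! * x ^ k)
      =o[𝓝[>] (0 : ℝ)] fun x => x ^ n := by
  intro n
  induction n with
  | zero =>
    intro f hf
    simp only [Finset.range_one, Finset.sum_singleton, pow_zero, Nat.factorial_zero,
      Nat.cast_one, div_one, mul_one, iteratedDeriv_zero]
    rw [isLittleO_one_iff]
    have : Tendsto f (𝓝[>] (0:ℝ)) (𝓝 (f 0)) :=
      (hf.continuousAt.tendsto).mono_left nhdsWithin_le_nhds
    simpa using this.sub_const (f 0)
  | succ n ih =>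
    intro f hf
    obtain ⟨u, hu, hcu⟩ := hf.contDiffOn le_rfl (by simp)
    have hv0 : (0:ℝ) ∈ interior u := mem_interior_iff_mem_nhds.mpr hu
    have hcv : ContDiffOn ℝ (n + 1 : ℕ) f (interior u) := hcu.mono interior_subset
    have h1n : (1 : WithTop ℕ∞) ≤ (n + 1 : ℕ) := by exact_mod_cast Nat.succ_le_succ (Nat.zero_le n)
    have hfd : ∀ t ∈ interior u, HasDerivAt f (deriv f t) t := fun t ht =>
      ((hcv.differentiableOn (by exact_mod_cast Nat.succ_ne_zero n) t ht).differentiableAt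
        (isOpen_interior.mem_nhds ht)).hasDerivAt
    have hdc : ContDiffOn ℝ (n : ℕ) (deriv f) (interior u) :=
      hcv.deriv_of_isOpen isOpen_interior (by exact_mod_cast le_rfl)
    have hda : ContDiffAt ℝ (n : ℕ) (deriv f) 0 :=
      hdc.contDiffAt (isOpen_interior.mem_nhds hv0)
    have IH := ih (deriv f) hda
    rw [isLittleO_iff]
    intro ε hε
    have IH' := IH.def hε
    obtain ⟨δ₁, hδ₁, hsub₁⟩ := mem_nhdsGT_iff_exists_Ioo_subset.1 IH'
    obtain ⟨δ₂, hδ₂pos, hball⟩ := Metric.isOpen_iff.1 isOpen_interior 0 hv0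
    set δ := min δ₁ δ₂ with hδ
    have hδpos : 0 < δ := lt_min hδ₁ hδ₂pos
    filter_upwards [Ioo_mem_nhdsGT_of_mem (show (0:ℝ) ∈ Ico 0 δ from ⟨le_refl 0, hδpos⟩)]
      with x hx
    set R := fun y : ℝ => f y - ∑ k ∈ Finset.range (n + 1 + 1), iteratedDeriv k f 0 / k ! * y ^ k
      with hR
    set R' := fun y : ℝ =>
      deriv f y - ∑ k ∈ Finset.range (n + 1), iteratedDeriv k (deriv f) 0 / k ! * y ^ k with hR'
    have hsubv : Icc 0 x ⊆ interior u := by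
      intro t ht
      apply hball
      rw [Metric.mem_ball, Real.dist_eq, sub_zero, abs_of_nonneg ht.1]
      exact lt_of_le_of_lt ht.2 (lt_of_lt_of_le hx.2 (min_le_right _ _))
    have hRd : ∀ t ∈ interior u, HasDerivAt R (R' t) t := by
      intro t ht
      have h1 := hfd t ht
      have h3 : HasDerivAt (fun y : ℝ => ∑ k ∈ Finset.range (n + 1 + 1),
          iteratedDeriv k f 0 / k ! * y ^ k)
          (∑ k ∈ Finset.range (n + 1 + 1), iteratedDeriv k f 0 / k ! * (k * t ^ (k - 1))) t :=
        HasDerivAt.fun_sum fun k _ => (hasDerivAt_pow k t).const_mul _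
      have hsum_eq : ∑ k ∈ Finset.range (n + 1), iteratedDeriv k (deriv f) 0 / (k ! : ℝ) * t ^ k
          = ∑ k ∈ Finset.range (n + 1 + 1),
              iteratedDeriv k f 0 / (k ! : ℝ) * ((k : ℝ) * t ^ (k - 1)) := by
        rw [Finset.sum_range_succ'
          (fun k => iteratedDeriv k f 0 / (k ! : ℝ) * ((k : ℝ) * t ^ (k - 1))) (n + 1)]
        simp only [Nat.cast_zero, zero_mul, mul_zero, add_zero, Nat.add_sub_cancel]
        refine Finset.sum_congr rfl fun k _ => ?_
        rw [show iteratedDeriv (k + 1) f = iteratedDeriv k (deriv f) from iteratedDeriv_succ']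
        rw [Nat.factorial_succ]
        have hk : ((k ! : ℝ)) ≠ 0 := by exact_mod_cast Nat.factorial_ne_zero k
        have hk1 : ((k : ℝ) + 1) ≠ 0 := by positivity
        push_cast
        field_simp
      have h2 : HasDerivAt (fun y : ℝ => ∑ k ∈ Finset.range (n + 1 + 1),
          iteratedDeriv k f 0 / k ! * y ^ k)
          (∑ k ∈ Finset.range (n + 1), iteratedDeriv k (deriv f) 0 / k ! * t ^ k) t := by
        rw [hsum_eq]
        exact h3
      exact h1.sub h2
    have hR0 : R 0 = 0 := by
      simp only [hR]
      rw [Finset.sum_eq_single 0]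
      · simp [iteratedDeriv_zero]
      · intro k _ hk
        rcases Nat.exists_eq_succ_of_ne_zero hk with ⟨j, rfl⟩
        simp
      · intro h
        exact absurd (Finset.mem_range.2 (Nat.succ_pos _)) h
    have hcont : ContinuousOn R (Icc 0 x) := fun t ht =>
      ((hRd t (hsubv ht)).continuousAt).continuousWithinAt
    obtain ⟨ξ, hξ, hslope⟩ := exists_hasDerivAt_eq_slope R R' hx.1 hcont
      (fun t ht => hRd t (hsubv (Ioo_subset_Icc_self ht)))
    rw [hR0, sub_zero, sub_zero] at hslope
    have hRx : R x = R' ξ * x := by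
      rw [eq_div_iff (ne_of_gt hx.1)] at hslope
      linarith [hslope]
    have hξbd : ‖R' ξ‖ ≤ ε * ‖ξ ^ n‖ := by
      apply hsub₁
      exact ⟨hξ.1, lt_trans hξ.2 (lt_of_lt_of_le hx.2 (min_le_left _ _))⟩
    have hξx : ‖ξ‖ ≤ ‖x‖ := by
      rw [Real.norm_eq_abs, Real.norm_eq_abs, abs_of_pos hξ.1, abs_of_pos hx.1]
      exact le_of_lt hξ.2
    calc ‖R x‖ = ‖R' ξ‖ * ‖x‖ := by rw [hRx, norm_mul]
      _ ≤ (ε * ‖ξ ^ n‖) * ‖x‖ := by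
          exact mul_le_mul_of_nonneg_right hξbd (norm_nonneg _)
      _ ≤ ε * ‖x ^ (n + 1)‖ := by
          rw [norm_pow, norm_pow, pow_succ, ← mul_assoc]
          have h5 : ‖ξ‖ ^ n ≤ ‖x‖ ^ n := pow_le_pow_left₀ (norm_nonneg _) hξx n
          have h6 := mul_le_mul_of_nonneg_right
            (mul_le_mul_of_nonneg_left h5 hε.le) (norm_nonneg x)
          linarith

/-- A polynomial that is `o(x^n)` as `x → 0⁺` has vanishing coefficients. -/
private theorem poly_o : ∀ (n : ℕ) (a : ℕ → ℝ),
    ((fun x => ∑ k ∈ Finset.range (n + 1), a k * x ^ k) =o[𝓝[>] (0:ℝ)] fun x => x ^ n) →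
    ∀ k ≤ n, a k = 0 := by
  intro n
  induction n with
  | zero =>
    intro a h k hk
    interval_cases k
    simp only [zero_add, Finset.range_one, Finset.sum_singleton, pow_zero, mul_one] at h
    have h' : Tendsto (fun _ : ℝ => a 0) (𝓝[>] (0:ℝ)) (𝓝 0) := (isLittleO_one_iff ℝ).1 h
    exact tendsto_nhds_unique tendsto_const_nhds h'
  | succ n ih =>
    intro a h
    have hx0 : Tendsto (fun x : ℝ => x ^ (n + 1)) (𝓝[>] (0:ℝ)) (𝓝 0) := by
      have := (continuous_pow (n + 1)).tendsto (0:ℝ)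
      simpa using this.mono_left nhdsWithin_le_nhds
    have hsum0 : Tendsto (fun x : ℝ => ∑ k ∈ Finset.range (n + 1 + 1), a k * x ^ k)
        (𝓝[>] (0:ℝ)) (𝓝 0) := IsLittleO.tendsto_zero_of_tendsto h hx0
    have hsuma : Tendsto (fun x : ℝ => ∑ k ∈ Finset.range (n + 1 + 1), a k * x ^ k)
        (𝓝[>] (0:ℝ)) (𝓝 (a 0)) := by
      have hc : Continuous (fun x : ℝ => ∑ k ∈ Finset.range (n + 1 + 1), a k * x ^ k) :=
        continuous_finset_sum _ fun k _ => continuous_const.mul (continuous_pow k)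
      have := (hc.tendsto 0).mono_left (nhdsWithin_le_nhds (s := Ioi (0:ℝ)))
      convert this using 2
      rw [Finset.sum_range_succ']
      simp
    have ha0 : a 0 = 0 := tendsto_nhds_unique hsuma hsum0
    have h2 : (fun x => ∑ k ∈ Finset.range (n + 1), a (k + 1) * x ^ k)
        =o[𝓝[>] (0:ℝ)] fun x => x ^ n := by
      rw [isLittleO_iff]
      intro ε hε
      filter_upwards [h.def hε, self_mem_nhdsWithin] with x hx hx0'
      have hx0'' : (0:ℝ) < x := hx0'
      have heq : ∑ k ∈ Finset.range (n + 1 + 1), a k * x ^ k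
          = x * ∑ k ∈ Finset.range (n + 1), a (k + 1) * x ^ k := by
        rw [Finset.sum_range_succ', ha0, Finset.mul_sum]
        simp only [zero_mul, add_zero]
        refine Finset.sum_congr rfl fun k _ => ?_
        ring
      rw [heq, norm_mul] at hx
      rw [pow_succ, mul_comm (x ^ n) x, norm_mul] at hx
      have hxn : (0:ℝ) < ‖x‖ := by rw [Real.norm_eq_abs, abs_of_pos hx0'']; exact hx0''
      calc ‖∑ k ∈ Finset.range (n + 1), a (k + 1) * x ^ k‖
          = (‖x‖ * ‖∑ k ∈ Finset.range (n + 1), a (k + 1) * x ^ k‖) / ‖x‖ := by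
            field_simp
        _ ≤ (ε * (‖x‖ * ‖x ^ n‖)) / ‖x‖ := by gcongr
        _ = ε * ‖x ^ n‖ := by field_simp
    have hs := ih (fun k => a (k + 1)) h2
    intro k hk
    cases k with
    | zero => exact ha0
    | succ j => exact hs j (Nat.lt_succ_iff.mp hk)

private theorem pow_littleo {m n : ℕ} (h : m < n) :
    (fun x : ℝ => x ^ n) =o[𝓝[>] (0:ℝ)] fun x => x ^ m :=
  (isLittleO_pow_pow h).mono nhdsWithin_le_nhds

private theorem mvt_uIcc {ψ : ℝ → ℝ} {s : Set ℝ} (hψ : ∀ t ∈ s, HasDerivAt ψ (deriv ψ t) t)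
    {a b : ℝ} (h : Set.uIcc a b ⊆ s) :
    ∃ ξ ∈ Set.uIcc a b, ψ b - ψ a = deriv ψ ξ * (b - a) := by
  rcases lt_trichotomy a b with hab | hab | hab
  · have hcont : ContinuousOn ψ (Icc a b) := fun t ht =>
      ((hψ t (h (by rwa [Set.uIcc_of_le hab.le]))).continuousAt).continuousWithinAt
    have hder : ∀ t ∈ Ioo a b, HasDerivAt ψ (deriv ψ t) t := fun t ht =>
      hψ t (h (by rw [Set.uIcc_of_le hab.le]; exact Ioo_subset_Icc_self ht))
    obtain ⟨ξ, hξ, hs⟩ := exists_hasDerivAt_eq_slope ψ (deriv ψ) hab hcont hder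
    refine ⟨ξ, by rw [Set.uIcc_of_le hab.le]; exact Ioo_subset_Icc_self hξ, ?_⟩
    rw [hs]
    field_simp
  · exact ⟨a, Set.left_mem_uIcc, by rw [hab]; ring⟩
  · have hcont : ContinuousOn ψ (Icc b a) := fun t ht =>
      ((hψ t (h (by rwa [Set.uIcc_of_ge hab.le]))).continuousAt).continuousWithinAt
    have hder : ∀ t ∈ Ioo b a, HasDerivAt ψ (deriv ψ t) t := fun t ht =>
      hψ t (h (by rw [Set.uIcc_of_ge hab.le]; exact Ioo_subset_Icc_self ht))
    obtain ⟨ξ, hξ, hs⟩ := exists_hasDerivAt_eq_slope ψ (deriv ψ) hab hcont hder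
    refine ⟨ξ, by rw [Set.uIcc_of_ge hab.le]; exact Ioo_subset_Icc_self hξ, ?_⟩
    rw [hs]
    rw [div_mul_eq_mul_div, eq_div_iff (sub_ne_zero.2 hab.ne')]
    ring

/-- Under the hypotheses of the previous statement (`hα = hΓ + c x⁵ + o(x⁵)`,
`hΓ(x) = x²/2 + O(x³)`, `ζ(x) = x - c x⁴ + O(x⁵)` solving `hα(ζ(x)) = hΓ(x)`),
one has `hα'(ζ(x)) = hΓ'(x) + 4 c x⁴ (1 + o(1))` as `x → 0⁺`. -/
theorem slope_at_level_matching_point_asymptotics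
    (hΓ hα : ℝ → ℝ) (c : ℝ) (ζ : ℝ → ℝ)
    (hΓ5 : ContDiffAt ℝ 5 hΓ 0) (hα5 : ContDiffAt ℝ 5 hα 0)
    (hΓ2 : (fun x => hΓ x - x ^ 2 / 2) =O[𝓝 0] fun x => x ^ 3)
    (hdiff : (fun x => hα x - hΓ x - c * x ^ 5) =o[𝓝 0] fun x => x ^ 5)
    (hc : c ≠ 0)
    (hΓ'' : iteratedDeriv 2 hΓ 0 = 1) (hα'' : iteratedDeriv 2 hα 0 = 1)
    (hζeq : ∀ᶠ x in 𝓝[>] 0, hα (ζ x) = hΓ x)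
    (hζ1 : Tendsto (fun x => ζ x / x) (𝓝[>] 0) (𝓝 1))
    (hζ4 : (fun x => ζ x - (x - c * x ^ 4)) =O[𝓝[>] 0] fun x => x ^ 5) :
    (fun x => deriv hα (ζ x) - deriv hΓ x - 4 * c * x ^ 4) =o[𝓝[>] 0]
      fun x => x ^ 4 := by
  have hΓ5' : ContDiffAt ℝ (5:ℕ) hΓ 0 := by exact_mod_cast hΓ5
  have hα5' : ContDiffAt ℝ (5:ℕ) hα 0 := by exact_mod_cast hα5
  set g : ℝ → ℝ := fun y => hα y - hΓ y with hgdef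
  have hg5 : ContDiffAt ℝ (5:ℕ) g 0 := hα5'.sub hΓ5'
  have h1 := peano_taylor 5 g hg5
  have hdiff' : (fun x => g x - c * x ^ 5) =o[𝓝[>] (0:ℝ)] fun x => x ^ 5 :=
    hdiff.mono nhdsWithin_le_nhds
  have h3 : (fun x => ∑ k ∈ Finset.range (5 + 1),
      (if k = 5 then iteratedDeriv 5 g 0 / 120 - c else iteratedDeriv k g 0 / k !) * x ^ k)
      =o[𝓝[>] (0:ℝ)] fun x => x ^ 5 := by
    have h4 := hdiff'.sub h1
    refine h4.congr' (Filter.Eventually.of_forall fun x => ?_) Filter.EventuallyEq.rfl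
    simp [Finset.sum_range_succ, Nat.factorial]
    ring
  have hb := poly_o 5 _ h3
  have e1 : deriv g 0 = 0 := by
    have h := hb 1 (by norm_num)
    norm_num [Nat.factorial] at h
    exact h
  have e2 : iteratedDeriv 2 g 0 = 0 := by
    have h := hb 2 (by norm_num)
    norm_num [Nat.factorial] at h
    exact h
  have e3 : iteratedDeriv 3 g 0 = 0 := by
    have h := hb 3 (by norm_num)
    norm_num [Nat.factorial] at h
    exact h
  have e4 : iteratedDeriv 4 g 0 = 0 := by
    have h := hb 4 (by norm_num)
    norm_num [Nat.factorial] at h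
    exact h
  have e5 : iteratedDeriv 5 g 0 = 120 * c := by
    have h := hb 5 (by norm_num)
    norm_num at h
    have h2 : iteratedDeriv 5 g 0 / 120 = c := by linarith [h]
    field_simp at h2
    linarith [h2]
  obtain ⟨u₁, hu₁, hcu₁⟩ := hg5.contDiffOn le_rfl (by simp)
  have hv₁0 : (0:ℝ) ∈ interior u₁ := mem_interior_iff_mem_nhds.mpr hu₁
  have hcv₁ : ContDiffOn ℝ (5:ℕ) g (interior u₁) := hcu₁.mono interior_subset
  have hdg4 : ContDiffAt ℝ (4:ℕ) (deriv g) 0 :=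
    (hcv₁.deriv_of_isOpen isOpen_interior (by norm_cast)).contDiffAt
      (isOpen_interior.mem_nhds hv₁0)
  have h4 := peano_taylor 4 (deriv g) hdg4
  have hkk : ∀ k : ℕ, iteratedDeriv k (deriv g) 0 = iteratedDeriv (k + 1) g 0 := fun k => by
    rw [iteratedDeriv_succ']
  have k0 : iteratedDeriv 0 (deriv g) 0 = 0 := by rw [iteratedDeriv_zero]; exact e1
  have k1 : iteratedDeriv 1 (deriv g) 0 = 0 := by rw [hkk]; exact e2
  have k2 : iteratedDeriv 2 (deriv g) 0 = 0 := by rw [hkk]; exact e3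
  have k3 : iteratedDeriv 3 (deriv g) 0 = 0 := by rw [hkk]; exact e4
  have k4 : iteratedDeriv 4 (deriv g) 0 = 120 * c := by rw [hkk]; exact e5
  have hE : (fun y => deriv g y - 5 * c * y ^ 4) =o[𝓝[>] (0:ℝ)] fun y => y ^ 4 := by
    refine h4.congr' (Filter.Eventually.of_forall fun y => ?_) Filter.EventuallyEq.rfl
    simp only [Finset.sum_range_succ, Finset.sum_range_zero, k0, k1, k2, k3, k4]
    norm_num [Nat.factorial]
    left
    ring
  -- ζ tends to 0 from the right
  have hζ0 : Tendsto ζ (𝓝[>] (0:ℝ)) (𝓝 0) := by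
    have hx : Tendsto (fun x : ℝ => x) (𝓝[>] (0:ℝ)) (𝓝 0) := tendsto_id'.2 nhdsWithin_le_nhds
    have h := hζ1.mul hx
    have h' : Tendsto (fun x => ζ x / x * x) (𝓝[>] (0:ℝ)) (𝓝 0) := by simpa using h
    refine Filter.Tendsto.congr' ?_ h'
    filter_upwards [self_mem_nhdsWithin] with x hx0
    exact div_mul_cancel₀ _ (ne_of_gt hx0)
  have hζpos : ∀ᶠ x in 𝓝[>] (0:ℝ), 0 < ζ x := by
    have h := hζ1.eventually (eventually_gt_nhds (show (0:ℝ) < 1 by norm_num))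
    filter_upwards [h, self_mem_nhdsWithin] with x h1x h2x
    have h3x := mul_pos h1x h2x
    rwa [div_mul_cancel₀ _ (ne_of_gt h2x)] at h3x
  have hζt : Tendsto ζ (𝓝[>] (0:ℝ)) (𝓝[>] (0:ℝ)) := by
    rw [tendsto_nhdsWithin_iff]; exact ⟨hζ0, hζpos⟩
  have hζO : ζ =O[𝓝[>] (0:ℝ)] fun x => x := by
    have h := hζ1.isBigO_one ℝ
    have h2 := h.mul (isBigO_refl (fun x : ℝ => x) (𝓝[>] (0:ℝ)))
    refine h2.congr' ?_ ?_
    · filter_upwards [self_mem_nhdsWithin] with x hx0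
      exact div_mul_cancel₀ _ (ne_of_gt hx0)
    · exact Filter.Eventually.of_forall fun x => one_mul x
  have hA : (fun x => deriv g (ζ x) - 5 * c * (ζ x) ^ 4) =o[𝓝[>] (0:ℝ)] fun x => x ^ 4 :=
    (hE.comp_tendsto hζt).trans_isBigO (hζO.pow 4)
  have hBfac : (fun x => ζ x - x) =O[𝓝[>] (0:ℝ)] fun x => x ^ 4 := by
    have h5 : (fun x : ℝ => ζ x - (x - c * x ^ 4)) =O[𝓝[>] (0:ℝ)] fun x => x ^ 4 :=
      hζ4.trans (pow_littleo (by norm_num : 4 < 5)).isBigO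
    have h6 : (fun x : ℝ => -(c * x ^ 4)) =O[𝓝[>] (0:ℝ)] fun x => x ^ 4 :=
      ((isBigO_refl (fun x : ℝ => x ^ 4) _).const_mul_left c).neg_left
    have h7 := h5.add h6
    exact h7.congr' (Filter.Eventually.of_forall fun x => by ring) Filter.EventuallyEq.rfl
  have hB : (fun x => 5 * c * ((ζ x) ^ 4 - x ^ 4)) =o[𝓝[>] (0:ℝ)] fun x => x ^ 4 := by
    have t1 : (fun x => (ζ x) ^ 3) =O[𝓝[>] (0:ℝ)] fun x => x ^ 3 := hζO.pow 3
    have t2 : (fun x => (ζ x) ^ 2 * x) =O[𝓝[>] (0:ℝ)] fun x => x ^ 3 := by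
      have h := (hζO.pow 2).mul (isBigO_refl (fun x : ℝ => x) (𝓝[>] (0:ℝ)))
      exact h.congr' Filter.EventuallyEq.rfl (Filter.Eventually.of_forall fun x => by ring)
    have t3 : (fun x => ζ x * x ^ 2) =O[𝓝[>] (0:ℝ)] fun x => x ^ 3 := by
      have h := hζO.mul (isBigO_refl (fun x : ℝ => x ^ 2) (𝓝[>] (0:ℝ)))
      exact h.congr' Filter.EventuallyEq.rfl (Filter.Eventually.of_forall fun x => by ring)
    have hfac : (fun x => (ζ x) ^ 3 + (ζ x) ^ 2 * x + ζ x * x ^ 2 + x ^ 3)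
        =O[𝓝[>] (0:ℝ)] fun x => x ^ 3 := by
      have h := ((t1.add t2).add t3).add (isBigO_refl (fun x : ℝ => x ^ 3) (𝓝[>] (0:ℝ)))
      refine h.congr' Filter.EventuallyEq.rfl (Filter.Eventually.of_forall fun x => ?_)
      ring
    have hprod := hBfac.mul hfac
    have hdiff4 : (fun x => (ζ x) ^ 4 - x ^ 4) =O[𝓝[>] (0:ℝ)] fun x => x ^ 7 :=
      hprod.congr' (Filter.Eventually.of_forall fun x => by ring)
        (Filter.Eventually.of_forall fun x => by ring)
    exact (hdiff4.trans_isLittleO (pow_littleo (by norm_num : 4 < 7))).const_mul_left (5 * c)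
  have hD : (fun x => ζ x - x + c * x ^ 4) =o[𝓝[>] (0:ℝ)] fun x => x ^ 4 := by
    have h := hζ4.trans_isLittleO (pow_littleo (by norm_num : 4 < 5))
    exact h.congr' (Filter.Eventually.of_forall fun x => by ring) Filter.EventuallyEq.rfl
  -- the middle term via the mean value theorem
  obtain ⟨u₂, hu₂, hcu₂⟩ := hΓ5'.contDiffOn le_rfl (by simp)
  have hw0 : (0:ℝ) ∈ interior u₂ := mem_interior_iff_mem_nhds.mpr hu₂
  have hcw : ContDiffOn ℝ (5:ℕ) hΓ (interior u₂) := hcu₂.mono interior_subset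
  have hψ4 : ContDiffOn ℝ (4:ℕ) (deriv hΓ) (interior u₂) :=
    hcw.deriv_of_isOpen isOpen_interior (by norm_cast)
  have hψd : ∀ t ∈ interior u₂, HasDerivAt (deriv hΓ) (deriv (deriv hΓ) t) t := fun t ht =>
    ((hψ4.differentiableOn (by norm_num) t
      ht).differentiableAt (isOpen_interior.mem_nhds ht)).hasDerivAt
  have hψ3 : ContDiffOn ℝ (3:ℕ) (deriv (deriv hΓ)) (interior u₂) :=
    hψ4.deriv_of_isOpen isOpen_interior (by norm_cast)
  have hψ'cont : ContinuousAt (deriv (deriv hΓ)) 0 :=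
    (hψ3.continuousOn).continuousAt (isOpen_interior.mem_nhds hw0)
  have hψ'0 : deriv (deriv hΓ) 0 = 1 := by
    have h : iteratedDeriv 2 hΓ = deriv (deriv hΓ) := by
      rw [iteratedDeriv_succ, iteratedDeriv_one]
    rw [← h]
    exact hΓ''
  have hΓdiffAt : ∀ t ∈ interior u₂, DifferentiableAt ℝ hΓ t := fun t ht =>
    (hcw.differentiableOn (by norm_num) t
      ht).differentiableAt (isOpen_interior.mem_nhds ht)
  have hC : (fun x => deriv hΓ (ζ x) - deriv hΓ x - (ζ x - x)) =o[𝓝[>] (0:ℝ)]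
      fun x => x ^ 4 := by
    rw [isLittleO_iff]
    intro ε hε
    obtain ⟨C, hCpos, hCbd⟩ := hBfac.exists_pos
    have hCbd' := hCbd.bound
    have htend : Tendsto (deriv (deriv hΓ)) (𝓝 0) (𝓝 1) := by
      rw [← hψ'0]; exact hψ'cont.tendsto
    have hball : ∀ᶠ t in 𝓝 (0:ℝ), ‖deriv (deriv hΓ) t - 1‖ ≤ ε / C ∧ t ∈ interior u₂ := by
      have h1 : ∀ᶠ t in 𝓝 (0:ℝ), ‖deriv (deriv hΓ) t - 1‖ ≤ ε / C := by
        have h2 := htend (Metric.closedBall_mem_nhds (1:ℝ) (div_pos hε hCpos))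
        filter_upwards [h2] with t ht
        simpa [Real.dist_eq, Real.norm_eq_abs] using ht
      have hmem : ∀ᶠ t in 𝓝 (0:ℝ), t ∈ interior u₂ := isOpen_interior.mem_nhds hw0
      exact h1.and hmem
    obtain ⟨δ₁, hδ₁pos, hδ₁⟩ := Metric.eventually_nhds_iff.1 hball
    have hζsmall : ∀ᶠ x in 𝓝[>] (0:ℝ), |ζ x| < δ₁ := by
      have h := hζ0 (Metric.ball_mem_nhds (0:ℝ) hδ₁pos)
      filter_upwards [h] with x hx
      simpa [Real.dist_eq] using hx
    filter_upwards [hCbd', hζpos, hζsmall,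
      Ioo_mem_nhdsGT_of_mem (show (0:ℝ) ∈ Ico 0 δ₁ from ⟨le_refl _, hδ₁pos⟩)]
      with x hx1 hx2 hx3 hx4
    have hsub : Set.uIcc x (ζ x) ⊆
        {t | ‖deriv (deriv hΓ) t - 1‖ ≤ ε / C ∧ t ∈ interior u₂} := by
      intro t ht
      rw [Set.mem_uIcc] at ht
      have htpos : 0 < t := by rcases ht with ⟨h', _⟩ | ⟨h', _⟩ <;> linarith [hx4.1, hx2]
      have htlt : t < δ₁ := by
        have hζlt : ζ x < δ₁ := lt_of_le_of_lt (le_abs_self _) hx3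
        rcases ht with ⟨_, h'⟩ | ⟨_, h'⟩ <;> linarith [hx4.2]
      apply hδ₁
      rw [Real.dist_eq, sub_zero, abs_of_pos htpos]
      exact htlt
    obtain ⟨ξ, hξ, heq⟩ := mvt_uIcc
      (s := {t | ‖deriv (deriv hΓ) t - 1‖ ≤ ε / C ∧ t ∈ interior u₂})
      (fun t ht => hψd t ht.2) hsub
    have hξgood := hsub hξ
    have hkey : deriv hΓ (ζ x) - deriv hΓ x - (ζ x - x)
        = (deriv (deriv hΓ) ξ - 1) * (ζ x - x) := by
      rw [heq]; ring
    rw [hkey, norm_mul]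
    calc ‖deriv (deriv hΓ) ξ - 1‖ * ‖ζ x - x‖
        ≤ (ε / C) * (C * ‖x ^ 4‖) :=
          mul_le_mul hξgood.1 hx1 (norm_nonneg _) (le_of_lt (div_pos hε hCpos))
      _ = ε * ‖x ^ 4‖ := by field_simp
  -- assemble
  obtain ⟨u₃, hu₃, hcu₃⟩ := hα5'.contDiffOn le_rfl (by simp)
  have hv₃0 : (0:ℝ) ∈ interior u₃ := mem_interior_iff_mem_nhds.mpr hu₃
  have hcv₃ : ContDiffOn ℝ (5:ℕ) hα (interior u₃) := hcu₃.mono interior_subset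
  have hsum := ((hA.add hB).add hC).add hD
  have hev : ∀ᶠ x in 𝓝[>] (0:ℝ), ζ x ∈ interior u₂ ∩ interior u₃ :=
    hζ0 (Filter.inter_mem (isOpen_interior.mem_nhds hw0) (isOpen_interior.mem_nhds hv₃0))
  refine hsum.congr' ?_ Filter.EventuallyEq.rfl
  filter_upwards [hev] with x hx
  have hαdiff : DifferentiableAt ℝ hα (ζ x) :=
    (hcv₃.differentiableOn (by norm_num) _
      hx.2).differentiableAt (isOpen_interior.mem_nhds hx.2)
  have hΓdiff : DifferentiableAt ℝ hΓ (ζ x) := hΓdiffAt _ hx.1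
  have hgd : deriv g (ζ x) = deriv hα (ζ x) - deriv hΓ (ζ x) := by
    rw [hgdef]
    exact deriv_sub hαdiff hΓdiff
  rw [hgd]
  ring
end

section
/- Let f, g be germs at 0 of C¹ maps ℝ → ℝ with f(0) = g(0) = 0, f(t) ≃ g(t) ≃ -t and f'(t) → -1 as t → 0. Suppose there are functions x ↦ s(x), t(x) with s(x) ≃ t(x) ≃ x, s(x) - t(x) = 4c x⁴(1+o(1)), f(s(x)) - g(t(x)) = 4c x⁴(1+o(1)) as x → 0. Then f(t) - g(t) = 8 c t⁴ (1 + o(1)) as t → 0. -/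
open Filter Topology Asymptotics


lemma tendsto_zero_of_div_tendsto {u : ℝ → ℝ} {L : ℝ}
    (h : Tendsto (fun x => u x / x) (𝓝[≠] 0) (𝓝 L)) :
    Tendsto u (𝓝[≠] 0) (𝓝 0) := by
  have hx : Tendsto (fun x : ℝ => x) (𝓝[≠] (0:ℝ)) (𝓝 0) :=
    tendsto_id.mono_right nhdsWithin_le_nhds
  have h2 := h.mul hx
  rw [mul_zero] at h2
  refine h2.congr' ?_
  filter_upwards [self_mem_nhdsWithin] with x hx0
  exact div_mul_cancel₀ _ hx0

lemma quart_bounds {x t δ : ℝ} (hδ0 : 0 ≤ δ) (hδh : δ ≤ 1/2)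
    (h : |t - x| ≤ δ * |x|) :
    x ^ 4 ≤ 16 * t ^ 4 ∧ |x ^ 4 - t ^ 4| ≤ 30 * δ * t ^ 4 := by
  set a := |x| with ha'
  set b := |t| with hb'
  have ha : 0 ≤ a := abs_nonneg x
  have hb : 0 ≤ b := abs_nonneg t
  have hab : |a - b| ≤ δ * a := by
    have h1 : |a - b| ≤ |x - t| := abs_abs_sub_abs_le_abs_sub x t
    rw [abs_sub_comm x t] at h1
    exact h1.trans h
  obtain ⟨hab1, hab2⟩ := abs_le.mp hab
  have hA : a ≤ 2 * b := by nlinarith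
  have hx4 : x ^ 4 = a ^ 4 := by rw [ha', ← abs_pow, abs_of_nonneg (by positivity)]
  have ht4 : t ^ 4 = b ^ 4 := by rw [hb', ← abs_pow, abs_of_nonneg (by positivity)]
  constructor
  · rw [hx4, ht4]; nlinarith [pow_le_pow_left₀ ha hA 4]
  · rw [hx4, ht4]
    have hS : a^3 + a^2*b + a*b^2 + b^3 ≤ 15 * b^3 := by
      nlinarith [pow_le_pow_left₀ ha hA 3, pow_le_pow_left₀ ha hA 2, mul_nonneg ha hb,
        mul_nonneg (mul_nonneg ha ha) hb, mul_nonneg ha (mul_nonneg hb hb)]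
    have hSpos : 0 ≤ a^3 + a^2*b + a*b^2 + b^3 := by positivity
    have h1 : a - b ≤ 2 * δ * b := by nlinarith
    have h2 : b - a ≤ 2 * δ * b := by nlinarith
    rw [abs_le]
    constructor
    · nlinarith [mul_le_mul h2 hS hSpos (by nlinarith : (0:ℝ) ≤ 2 * δ * b)]
    · nlinarith [mul_le_mul h1 hS hSpos (by nlinarith : (0:ℝ) ≤ 2 * δ * b)]


/-- Abstract content of Claim 2: let `f, g` be `C¹` germs at `0` with `f 0 = g 0 = 0`,
`f(t) ≃ g(t) ≃ -t`, `f'(t) → -1` as `t → 0`. Suppose there are functions `s(x) ≃ r(x) ≃ x`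
(with `r` continuous) such that `s(x) - r(x) = 4c x⁴(1+o(1))` and
`f(s(x)) - g(r(x)) = 4c x⁴(1+o(1))` as `x → 0`. Then `f(t) - g(t) = 8 c t⁴ (1 + o(1))`
as `t → 0`. Here `c` is a nonzero real constant. -/
theorem involution_difference_eight_c_t4
    (f g s r : ℝ → ℝ) (c : ℝ) (hc : c ≠ 0)
    (hf1 : ContDiffAt ℝ 1 f 0) (hg1 : ContDiffAt ℝ 1 g 0)
    (hf0 : f 0 = 0) (hg0 : g 0 = 0)
    (hfa : Tendsto (fun t => f t / t) (𝓝[≠] 0) (𝓝 (-1)))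
    (hga : Tendsto (fun t => g t / t) (𝓝[≠] 0) (𝓝 (-1)))
    (hf' : Tendsto (deriv f) (𝓝 0) (𝓝 (-1)))
    (hrcont : Continuous r)
    (hs1 : Tendsto (fun x => s x / x) (𝓝[≠] 0) (𝓝 1))
    (hr1 : Tendsto (fun x => r x / x) (𝓝[≠] 0) (𝓝 1))
    (hsr : (fun x => s x - r x - 4 * c * x ^ 4) =o[𝓝[≠] 0] fun x => x ^ 4)
    (hfg : (fun x => f (s x) - g (r x) - 4 * c * x ^ 4) =o[𝓝[≠] 0] fun x => x ^ 4) :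
    (fun t => f t - g t - 8 * c * t ^ 4) =o[𝓝[≠] 0] fun t => t ^ 4 := by
  have hs0 : Tendsto s (𝓝[≠] 0) (𝓝 0) := tendsto_zero_of_div_tendsto hs1
  have hr0 : Tendsto r (𝓝[≠] 0) (𝓝 0) := tendsto_zero_of_div_tendsto hr1
  -- r 0 = 0
  have hr00 : r 0 = 0 := by
    have h1 : Tendsto r (𝓝[≠] (0:ℝ)) (𝓝 (r 0)) :=
      (hrcont.tendsto 0).mono_left nhdsWithin_le_nhds
    exact (tendsto_nhds_unique h1 hr0)
  -- s - r = O(x⁴)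
  have hO : (fun x => s x - r x) =O[𝓝[≠] (0:ℝ)] fun x => x ^ 4 := by
    have heq : (fun x => s x - r x)
        = fun x => (s x - r x - 4 * c * x ^ 4) + 4 * c * x ^ 4 := by
      funext x; ring
    rw [heq]
    exact hsr.isBigO.add ((isBigO_refl (fun x : ℝ => x ^ 4) _).const_mul_left (4 * c))
  -- MVT step: E x := f (s x) - f (r x) + (s x - r x) is o(x⁴)
  have hE : (fun x => f (s x) - f (r x) + (s x - r x)) =o[𝓝[≠] (0:ℝ)] fun x => x ^ 4 := by
    refine IsLittleO.trans_isBigO ?_ hO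
    rw [isLittleO_iff]
    intro ε hε
    have hdiff : ∀ᶠ u in 𝓝 (0:ℝ), DifferentiableAt ℝ f u := by
      filter_upwards [hf1.eventually (by norm_num)] with u hu
      exact hu.differentiableAt one_ne_zero
    have hdb : ∀ᶠ u in 𝓝 (0:ℝ), |deriv f u + 1| ≤ ε := by
      have hmem : Metric.closedBall (-1:ℝ) ε ∈ 𝓝 (-1:ℝ) := Metric.closedBall_mem_nhds _ hε
      filter_upwards [hf' hmem] with u hu
      have : dist (deriv f u) (-1) ≤ ε := hu
      rw [Real.dist_eq] at this
      convert this using 2; ring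
    obtain ⟨δ, hδ0, hball⟩ := Metric.eventually_nhds_iff.mp (hdiff.and hdb)
    have hsball := hs0 (Metric.ball_mem_nhds (0:ℝ) hδ0)
    have hrball := hr0 (Metric.ball_mem_nhds (0:ℝ) hδ0)
    filter_upwards [hsball, hrball] with x hsx hrx
    have hderiv : ∀ u ∈ Metric.ball (0:ℝ) δ,
        HasDerivWithinAt (fun u => f u + u) (deriv f u + 1) (Metric.ball (0:ℝ) δ) u := by
      intro u hu
      have hu' : dist u (0:ℝ) < δ := Metric.mem_ball.mp hu
      exact (((hball hu').1.hasDerivAt).add (hasDerivAt_id u)).hasDerivWithinAt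
    have hbound : ∀ u ∈ Metric.ball (0:ℝ) δ, ‖deriv f u + 1‖ ≤ ε := by
      intro u hu
      have hu' : dist u (0:ℝ) < δ := Metric.mem_ball.mp hu
      simpa using (hball hu').2
    have key := (convex_ball (0:ℝ) δ).norm_image_sub_le_of_norm_hasDerivWithin_le
      hderiv hbound hrx hsx
    have heq : (fun u => f u + u) (s x) - (fun u => f u + u) (r x)
        = f (s x) - f (r x) + (s x - r x) := by simp; ring
    rw [heq] at key
    exact key
  -- Composite: F(r x) - 8c x⁴ = o(x⁴)
  have hA : (fun x => f (r x) - g (r x) - 8 * c * x ^ 4) =o[𝓝[≠] (0:ℝ)] fun x => x ^ 4 := by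
    have h := (hfg.add hsr).sub hE
    refine h.congr' (Eventually.of_forall fun x => by ring) (Eventually.of_forall fun x => rfl)
  -- Transfer from x-asymptotics to t-asymptotics via IVT
  rw [isLittleO_iff]
  intro ε hε
  set δ : ℝ := min (1/2) (ε / (16 + 240 * |c|)) with hδdef
  have hCpos : (0:ℝ) < 16 + 240 * |c| := by positivity
  have hδ0 : 0 < δ := lt_min (by norm_num) (div_pos hε hCpos)
  have hδh : δ ≤ 1/2 := min_le_left _ _
  have hδε : δ * (16 + 240 * |c|) ≤ ε := by
    have := min_le_right (1/2 : ℝ) (ε / (16 + 240 * |c|))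
    calc δ * (16 + 240 * |c|) ≤ (ε / (16 + 240 * |c|)) * (16 + 240 * |c|) := by
          exact mul_le_mul_of_nonneg_right this hCpos.le
      _ = ε := div_mul_cancel₀ _ hCpos.ne'
  have h1 := isLittleO_iff.mp hA hδ0
  have h2 : ∀ᶠ x in 𝓝[≠] (0:ℝ), |r x / x - 1| ≤ δ := by
    have hmem : Metric.closedBall (1:ℝ) δ ∈ 𝓝 (1:ℝ) := Metric.closedBall_mem_nhds _ hδ0
    filter_upwards [hr1 hmem] with x hx
    have : dist (r x / x) 1 ≤ δ := hx
    rwa [Real.dist_eq] at this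
  obtain ⟨η, hη0, hη⟩ := Metric.eventually_nhds_iff.mp (eventually_nhdsWithin_iff.mp (h1.and h2))
  set a : ℝ := η / 2 with hadef
  have ha0 : 0 < a := half_pos hη0
  -- bounds at endpoints a, -a
  have haη : dist a (0:ℝ) < η := by
    rw [Real.dist_eq, sub_zero, abs_of_pos ha0]; linarith
  have hmaη : dist (-a) (0:ℝ) < η := by
    rw [Real.dist_eq, sub_zero, abs_neg, abs_of_pos ha0]; linarith
  have hra : a / 2 ≤ r a := by
    have h := (hη haη (by simp [Set.mem_compl_iff, ha0.ne'] : a ∈ ({0}ᶜ : Set ℝ))).2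
    have h' := (abs_le.mp (h.trans hδh)).1
    have : (1:ℝ)/2 ≤ r a / a := by linarith
    have := (le_div_iff₀ ha0).mp this
    linarith
  have hrma : r (-a) ≤ -(a / 2) := by
    have h := (hη hmaη (by simp [Set.mem_compl_iff, ha0.ne'] : (-a) ∈ ({0}ᶜ : Set ℝ))).2
    have h' := (abs_le.mp (h.trans hδh)).1
    have hna : (-a) < 0 := by linarith
    have h'' : (1:ℝ)/2 ≤ r (-a) / (-a) := by linarith
    have := (le_div_iff_of_neg hna).mp h''
    linarith
  rw [eventually_nhdsWithin_iff, Metric.eventually_nhds_iff]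
  refine ⟨a / 2, by positivity, fun t hdist htmem => ?_⟩
  have htne : t ≠ 0 := htmem
  rw [Real.dist_eq, sub_zero] at hdist
  -- common final step given a suitable x
  have key : ∀ x : ℝ, x ≠ 0 → |x| < η → r x = t →
      ‖f t - g t - 8 * c * t ^ 4‖ ≤ ε * ‖t ^ 4‖ := by
    intro x hxne hxη hrxt
    have hx := hη (by rwa [Real.dist_eq, sub_zero]) (hxne : x ∈ ({0}ᶜ : Set ℝ))
    have hb1 := hx.1
    rw [hrxt] at hb1
    have hb2 := hx.2
    have htx : |t - x| ≤ δ * |x| := by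
      have heq : r x / x - 1 = (r x - x) / x := by field_simp
      rw [heq, abs_div] at hb2
      have := (div_le_iff₀ (abs_pos.mpr hxne)).mp hb2
      rwa [hrxt] at this
    obtain ⟨hq1, hq2⟩ := quart_bounds hδ0.le hδh htx
    have ht4 : (0:ℝ) ≤ t ^ 4 := by positivity
    have hx4 : (0:ℝ) ≤ x ^ 4 := by positivity
    have habs : ‖f t - g t - 8 * c * t ^ 4‖ ≤ |f t - g t - 8 * c * x ^ 4| + 8 * |c| * |x ^ 4 - t ^ 4| := by
      rw [Real.norm_eq_abs]
      have heq : f t - g t - 8 * c * t ^ 4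
          = (f t - g t - 8 * c * x ^ 4) + 8 * c * (x ^ 4 - t ^ 4) := by ring
      rw [heq]
      refine (abs_add_le _ _).trans ?_
      rw [abs_mul, abs_mul, abs_of_nonneg (by norm_num : (0:ℝ) ≤ 8)]
    have hb1' : |f t - g t - 8 * c * x ^ 4| ≤ δ * x ^ 4 := by
      have := hb1
      rwa [Real.norm_eq_abs, Real.norm_eq_abs, abs_of_nonneg hx4] at this
    simp only [Real.norm_eq_abs] at habs ⊢
    rw [abs_of_nonneg ht4]
    have hfin : δ * x ^ 4 + 8 * |c| * (30 * δ * t ^ 4) ≤ ε * t ^ 4 := by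
      have h16 : δ * x ^ 4 ≤ δ * (16 * t ^ 4) := mul_le_mul_of_nonneg_left hq1 hδ0.le
      nlinarith [mul_le_mul_of_nonneg_right hδε ht4, abs_nonneg c]
    have h8 : (0:ℝ) ≤ 8 * |c| := by positivity
    have hstep : |f t - g t - 8 * c * x ^ 4| + 8 * |c| * |x ^ 4 - t ^ 4|
        ≤ δ * x ^ 4 + 8 * |c| * (30 * δ * t ^ 4) :=
      add_le_add hb1' (mul_le_mul_of_nonneg_left hq2 h8)
    linarith
  rcases lt_or_gt_of_ne htne with htneg | htpos
  · -- t < 0 : use IVT on [-a, 0]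
    have hsub : Set.Icc (r (-a)) (r 0) ⊆ r '' Set.Icc (-a) 0 :=
      intermediate_value_Icc (by linarith) hrcont.continuousOn
    have htmem' : t ∈ Set.Icc (r (-a)) (r 0) := by
      rw [hr00]
      constructor
      · have : -(a/2) < t := by
          have := abs_lt.mp hdist; linarith [this.1]
        linarith
      · linarith
    obtain ⟨x, hxmem, hrxt⟩ := hsub htmem'
    have hxne : x ≠ 0 := by
      rintro rfl; rw [hr00] at hrxt; exact htne hrxt.symm
    refine key x hxne ?_ hrxt
    have hx1 := hxmem.1
    have hx2 := hxmem.2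
    rw [abs_lt]; constructor <;> linarith
  · -- t > 0 : use IVT on [0, a]
    have hsub : Set.Icc (r 0) (r a) ⊆ r '' Set.Icc 0 a :=
      intermediate_value_Icc ha0.le hrcont.continuousOn
    have htmem' : t ∈ Set.Icc (r 0) (r a) := by
      rw [hr00]
      constructor
      · linarith
      · have : t < a/2 := by
          have := abs_lt.mp hdist; linarith [this.2]
        linarith
    obtain ⟨x, hxmem, hrxt⟩ := hsub htmem'
    have hxne : x ≠ 0 := by
      rintro rfl; rw [hr00] at hrxt; exact htne hrxt.symm
    refine key x hxne ?_ hrxt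
    have hx1 := hxmem.1
    have hx2 := hxmem.2
    rw [abs_lt]; constructor <;> linarith
end

section
/- A connected C⁶ planar curve all of whose points are sextactic (i.e., at every point the osculating conic has contact of order at least six with the curve) is contained in a conic. -/
open Filter Topology

/-- Evaluation of a general (possibly degenerate) conic, i.e. degree-two polynomial,
with coefficients `a b c d e f` at a point of the plane. -/
def conicEval (a b c d e f : ℝ) (p : ℝ × ℝ) : ℝ :=
  a * p.1 ^ 2 + b * p.1 * p.2 + c * p.2 ^ 2 + d * p.1 + e * p.2 + f




-- iteratedDeriv of a constant function
lemma myIteratedDeriv_const {n : ℕ} (c : ℝ) (x : ℝ) :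
    iteratedDeriv n (fun _ : ℝ => c) x = if n = 0 then c else 0 := by
  induction n generalizing x with
  | zero => simp
  | succ m ih =>
    rw [iteratedDeriv_succ]
    have : iteratedDeriv m (fun _ : ℝ => c) = fun y : ℝ => if m = 0 then c else 0 :=
      funext fun y => ih (x := y)
    rw [this]
    simp [deriv_const]

lemma myIteratedDeriv_add {n : ℕ} {f g : ℝ → ℝ} (hf : ContDiff ℝ n f) (hg : ContDiff ℝ n g)
    (x : ℝ) :
    iteratedDeriv n (fun t => f t + g t) x = iteratedDeriv n f x + iteratedDeriv n g x := by
  simp only [← iteratedDerivWithin_univ]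
  exact iteratedDerivWithin_add (Set.mem_univ x) uniqueDiffOn_univ
    (hf.contDiffWithinAt) (hg.contDiffWithinAt)

lemma myIteratedDeriv_const_mul {n : ℕ} {f : ℝ → ℝ} (hf : ContDiff ℝ n f) (c : ℝ) (x : ℝ) :
    iteratedDeriv n (fun t => c * f t) x = c * iteratedDeriv n f x := by
  simp only [← iteratedDerivWithin_univ]
  exact iteratedDerivWithin_const_mul (Set.mem_univ x) uniqueDiffOn_univ c (hf.contDiffWithinAt)

lemma myIteratedDeriv_sum {n : ℕ} {ι : Type*} (s : Finset ι) {f : ι → ℝ → ℝ}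
    (hf : ∀ i ∈ s, ContDiff ℝ n (f i)) (x : ℝ) :
    iteratedDeriv n (fun t => ∑ i ∈ s, f i t) x = ∑ i ∈ s, iteratedDeriv n (f i) x := by
  classical
  induction s using Finset.induction_on with
  | empty =>
    simp only [Finset.sum_empty]
    simpa using myIteratedDeriv_const (n := n) 0 x
  | insert _ _ hnot ih =>
    rename_i a s'
    simp only [Finset.sum_insert hnot]
    rw [myIteratedDeriv_add (hf a (Finset.mem_insert_self a s'))
      (ContDiff.sum fun i hi => hf i (Finset.mem_insert_of_mem hi)),
      ih (fun i hi => hf i (Finset.mem_insert_of_mem hi))]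

-- iterated derivative of a C^6 function is C^1 for orders ≤ 5
lemma myContDiff_iteratedDeriv {f : ℝ → ℝ} (hf : ContDiff ℝ 6 f) :
    ∀ k : ℕ, k ≤ 5 → ContDiff ℝ 1 (iteratedDeriv k f) := by
  have step : ∀ (m : ℕ) (g : ℝ → ℝ), ContDiff ℝ (m + 1 : ℕ) g → ContDiff ℝ (m : ℕ) (deriv g) := by
    intro m g hg
    have := (contDiff_succ_iff_deriv (f := g) (n := (m : WithTop ℕ∞))).mp (by exact_mod_cast hg)
    exact this.2.2
  have key : ∀ k : ℕ, k ≤ 5 → ContDiff ℝ ((6 - k : ℕ) : WithTop ℕ∞) (iteratedDeriv k f) := by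
    intro k hk
    induction k with
    | zero => simpa [iteratedDeriv_zero] using hf
    | succ m ih =>
      rw [iteratedDeriv_succ]
      have hm : m ≤ 5 := Nat.le_of_succ_le hk
      have h6m : (6 - m : ℕ) = (6 - (m + 1) : ℕ) + 1 := by omega
      have := ih hm
      rw [h6m] at this
      exact step _ _ (by exact_mod_cast this)
  intro k hk
  refine (key k hk).of_le ?_
  have h1 : (1 : ℕ) ≤ 6 - k := by omega
  exact_mod_cast h1

-- components of a Prod-valued curve
lemma myIteratedDeriv_prod {γ : ℝ → ℝ × ℝ} (hγ : ContDiff ℝ 6 γ) {k : ℕ} (hk : k ≤ 5) (t : ℝ) :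
    iteratedDeriv k γ t =
      (iteratedDeriv k (fun s => (γ s).1) t, iteratedDeriv k (fun s => (γ s).2) t) := by
  induction k generalizing t with
  | zero => simp
  | succ m ih =>
    have hm : m ≤ 5 := Nat.le_of_succ_le hk
    have h1 : ContDiff ℝ 6 (fun s => (γ s).1) := contDiff_fst.comp hγ
    have h2 : ContDiff ℝ 6 (fun s => (γ s).2) := contDiff_snd.comp hγ
    have d1 : DifferentiableAt ℝ (iteratedDeriv m (fun s => (γ s).1)) t :=
      (h1.differentiable_iteratedDeriv m (by exact_mod_cast Nat.lt_of_lt_of_le (Nat.lt_succ_self m) (by exact_mod_cast hk.trans (by norm_num)))).differentiableAt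
    have d2 : DifferentiableAt ℝ (iteratedDeriv m (fun s => (γ s).2)) t :=
      (h2.differentiable_iteratedDeriv m (by exact_mod_cast Nat.lt_of_lt_of_le (Nat.lt_succ_self m) (by exact_mod_cast hk.trans (by norm_num)))).differentiableAt
    have heq : iteratedDeriv m γ = fun s =>
        (iteratedDeriv m (fun s => (γ s).1) s, iteratedDeriv m (fun s => (γ s).2) s) :=
      funext fun s => ih hm s
    rw [iteratedDeriv_succ, heq, iteratedDeriv_succ, iteratedDeriv_succ]
    exact (HasDerivAt.prodMk (d1.hasDerivAt) (d2.hasDerivAt)).deriv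

lemma myContDiff_prod {ι : Type*} (s : Finset ι) (f : ι → ℝ → ℝ)
    (hf : ∀ i ∈ s, ContDiff ℝ 1 (f i)) :
    ContDiff ℝ 1 (fun t => ∏ i ∈ s, f i t) := by
  classical
  induction s using Finset.induction_on with
  | empty => simpa using contDiff_const
  | insert _ _ hnot ih =>
    rename_i a s'
    simp only [Finset.prod_insert hnot]
    exact (hf a (Finset.mem_insert_self a s')).mul
      (ih fun i hi => hf i (Finset.mem_insert_of_mem hi))

lemma myContDiff_det {A : ℝ → Matrix (Fin 6) (Fin 6) ℝ}
    (h : ∀ i j, ContDiff ℝ 1 (fun t => A t i j)) :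
    ContDiff ℝ 1 (fun t => (A t).det) := by
  have : (fun t => (A t).det)
      = fun t => ∑ σ : Equiv.Perm (Fin 6), (Equiv.Perm.sign σ : ℤ) * ∏ i, A t (σ i) i := by
    funext t
    rw [Matrix.det_apply]
    simp [Units.smul_def, zsmul_eq_mul]
  rw [this]
  refine ContDiff.sum fun σ _ => ?_
  exact contDiff_const.mul (myContDiff_prod _ _ fun i _ => h (σ i) i)

-- determinant is linear in a row: dot-product formula
lemma myDet_row_linear (A : Matrix (Fin 6) (Fin 6) ℝ) (ℓ : Fin 6) (w : Fin 6 → ℝ) :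
    (A.updateRow ℓ w).det = ∑ j, w j * (A.updateRow ℓ (Pi.single j 1)).det := by
  classical
  have hw : w = ∑ j, w j • (Pi.single j (1:ℝ) : Fin 6 → ℝ) := by
    funext i
    simp [Finset.sum_apply, Pi.single_apply]
  calc (A.updateRow ℓ w).det = (A.updateRow ℓ (∑ j, w j • (Pi.single j (1:ℝ) : Fin 6 → ℝ))).det := by rw [← hw]
    _ = ∑ j, w j * (A.updateRow ℓ (Pi.single j 1)).det := by
        have gen : ∀ s : Finset (Fin 6), ∀ v : Fin 6 → ℝ,
            (A.updateRow ℓ (∑ j ∈ s, v j • (Pi.single j (1:ℝ) : Fin 6 → ℝ))).det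
              = ∑ j ∈ s, v j * (A.updateRow ℓ (Pi.single j 1)).det := by
          intro s
          induction s using Finset.induction_on with
          | empty =>
            intro v
            simp only [Finset.sum_empty]
            apply Matrix.det_eq_zero_of_row_eq_zero ℓ
            intro j
            simp
          | insert _ _ hnot ih =>
            rename_i a s'
            intro v
            simp only [Finset.sum_insert hnot]
            rw [Matrix.det_updateRow_add, Matrix.det_updateRow_smul, ih v]
        exact gen Finset.univ w

section Leibniz
variable {F G : ℝ → ℝ} (hF : ContDiff ℝ 6 F) (hG : ContDiff ℝ 6 G)

lemma hA' (hF : ContDiff ℝ 6 F) (k : ℕ) (hk : k ≤ 4) (s : ℝ) :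
    HasDerivAt (iteratedDeriv k F) (iteratedDeriv (k + 1) F s) s := by
  have hd : DifferentiableAt ℝ (iteratedDeriv k F) s :=
    (hF.differentiable_iteratedDeriv k (by exact_mod_cast Nat.lt_of_le_of_lt hk (by norm_num))).differentiableAt
  have := hd.hasDerivAt
  rwa [show deriv (iteratedDeriv k F) s = iteratedDeriv (k + 1) F s from
    (congrFun (iteratedDeriv_succ (n := k)) s).symm] at this

include hF hG

lemma leibniz1 : ∀ s, iteratedDeriv 1 (fun x => F x * G x) s
    = iteratedDeriv 1 F s * iteratedDeriv 0 G s + iteratedDeriv 0 F s * iteratedDeriv 1 G s := by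
  intro s
  rw [iteratedDeriv_one]
  have h : HasDerivAt (fun x => F x * G x)
      (iteratedDeriv 1 F s * G s + F s * iteratedDeriv 1 G s) s := by
    have := (hA' hF 0 (by norm_num) s).mul (hA' hG 0 (by norm_num) s)
    simp only [iteratedDeriv_zero, iteratedDeriv_one, zero_add] at this ⊢
    exact this
  rw [h.deriv]
  simp [iteratedDeriv_zero]

lemma leibniz2 : ∀ s, iteratedDeriv 2 (fun x => F x * G x) s
    = iteratedDeriv 2 F s * iteratedDeriv 0 G s + 2 * (iteratedDeriv 1 F s * iteratedDeriv 1 G s)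
      + iteratedDeriv 0 F s * iteratedDeriv 2 G s := by
  intro s
  rw [show (2:ℕ) = 1 + 1 from rfl, iteratedDeriv_succ,
    funext (leibniz1 hF hG)]
  have h : HasDerivAt (fun x => iteratedDeriv 1 F x * iteratedDeriv 0 G x
      + iteratedDeriv 0 F x * iteratedDeriv 1 G x)
      ((iteratedDeriv 2 F s * iteratedDeriv 0 G s + iteratedDeriv 1 F s * iteratedDeriv 1 G s)
        + (iteratedDeriv 1 F s * iteratedDeriv 1 G s + iteratedDeriv 0 F s * iteratedDeriv 2 G s)) s :=
    ((hA' hF 1 (by norm_num) s).mul (hA' hG 0 (by norm_num) s)).add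
      ((hA' hF 0 (by norm_num) s).mul (hA' hG 1 (by norm_num) s))
  rw [h.deriv]; ring

lemma leibniz3 : ∀ s, iteratedDeriv 3 (fun x => F x * G x) s
    = iteratedDeriv 3 F s * iteratedDeriv 0 G s + 3 * (iteratedDeriv 2 F s * iteratedDeriv 1 G s)
      + 3 * (iteratedDeriv 1 F s * iteratedDeriv 2 G s)
      + iteratedDeriv 0 F s * iteratedDeriv 3 G s := by
  intro s
  rw [show (3:ℕ) = 2 + 1 from rfl, iteratedDeriv_succ, funext (leibniz2 hF hG)]
  have h : HasDerivAt (fun x => iteratedDeriv 2 F x * iteratedDeriv 0 G x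
      + 2 * (iteratedDeriv 1 F x * iteratedDeriv 1 G x)
      + iteratedDeriv 0 F x * iteratedDeriv 2 G x)
      ((iteratedDeriv 3 F s * iteratedDeriv 0 G s + iteratedDeriv 2 F s * iteratedDeriv 1 G s)
        + 2 * (iteratedDeriv 2 F s * iteratedDeriv 1 G s + iteratedDeriv 1 F s * iteratedDeriv 2 G s)
        + (iteratedDeriv 1 F s * iteratedDeriv 2 G s + iteratedDeriv 0 F s * iteratedDeriv 3 G s)) s :=
    (((hA' hF 2 (by norm_num) s).mul (hA' hG 0 (by norm_num) s)).add
      (((hA' hF 1 (by norm_num) s).mul (hA' hG 1 (by norm_num) s)).const_mul 2)).add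
      ((hA' hF 0 (by norm_num) s).mul (hA' hG 2 (by norm_num) s))
  rw [h.deriv]; ring

lemma leibniz4 : ∀ s, iteratedDeriv 4 (fun x => F x * G x) s
    = iteratedDeriv 4 F s * iteratedDeriv 0 G s + 4 * (iteratedDeriv 3 F s * iteratedDeriv 1 G s)
      + 6 * (iteratedDeriv 2 F s * iteratedDeriv 2 G s)
      + 4 * (iteratedDeriv 1 F s * iteratedDeriv 3 G s)
      + iteratedDeriv 0 F s * iteratedDeriv 4 G s := by
  intro s
  show iteratedDeriv (3+1) (fun x => F x * G x) s = _
  rw [iteratedDeriv_succ, funext (leibniz3 hF hG)]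
  have h : HasDerivAt (fun x => iteratedDeriv 3 F x * iteratedDeriv 0 G x
      + 3 * (iteratedDeriv 2 F x * iteratedDeriv 1 G x)
      + 3 * (iteratedDeriv 1 F x * iteratedDeriv 2 G x)
      + iteratedDeriv 0 F x * iteratedDeriv 3 G x)
      (((iteratedDeriv 4 F s * iteratedDeriv 0 G s + iteratedDeriv 3 F s * iteratedDeriv 1 G s)
        + 3 * (iteratedDeriv 3 F s * iteratedDeriv 1 G s + iteratedDeriv 2 F s * iteratedDeriv 2 G s))
        + 3 * (iteratedDeriv 2 F s * iteratedDeriv 2 G s + iteratedDeriv 1 F s * iteratedDeriv 3 G s)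
        + (iteratedDeriv 1 F s * iteratedDeriv 3 G s + iteratedDeriv 0 F s * iteratedDeriv 4 G s)) s :=
    ((((hA' hF 3 (by norm_num) s).mul (hA' hG 0 (by norm_num) s)).add
      (((hA' hF 2 (by norm_num) s).mul (hA' hG 1 (by norm_num) s)).const_mul 3)).add
      (((hA' hF 1 (by norm_num) s).mul (hA' hG 2 (by norm_num) s)).const_mul 3)).add
      ((hA' hF 0 (by norm_num) s).mul (hA' hG 3 (by norm_num) s))
  rw [h.deriv]; ring

end Leibniz

-- needs myIteratedDeriv_add etc: will concatenate. For testing, inline minimal copies: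
lemma myIteratedDeriv_const' {n : ℕ} (c : ℝ) (x : ℝ) :
    iteratedDeriv n (fun _ : ℝ => c) x = if n = 0 then c else 0 := by
  induction n generalizing x with
  | zero => simp
  | succ m ih =>
    rw [iteratedDeriv_succ]
    have : iteratedDeriv m (fun _ : ℝ => c) = fun y : ℝ => if m = 0 then c else 0 :=
      funext fun y => ih (x := y)
    rw [this]; simp [deriv_const]

lemma myIteratedDeriv_add' {n : ℕ} {f g : ℝ → ℝ} (hf : ContDiff ℝ n f) (hg : ContDiff ℝ n g)
    (x : ℝ) :
    iteratedDeriv n (fun t => f t + g t) x = iteratedDeriv n f x + iteratedDeriv n g x := by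
  simp only [← iteratedDerivWithin_univ]
  exact iteratedDerivWithin_add (Set.mem_univ x) uniqueDiffOn_univ hf.contDiffWithinAt hg.contDiffWithinAt

lemma myIteratedDeriv_const_mul' {n : ℕ} {f : ℝ → ℝ} (hf : ContDiff ℝ n f) (c : ℝ) (x : ℝ) :
    iteratedDeriv n (fun t => c * f t) x = c * iteratedDeriv n f x := by
  simp only [← iteratedDerivWithin_univ]
  exact iteratedDerivWithin_const_mul (Set.mem_univ x) uniqueDiffOn_univ c hf.contDiffWithinAt

lemma affine_iteratedDeriv {γ₁ γ₂ : ℝ → ℝ} (h1 : ContDiff ℝ 6 γ₁) (h2 : ContDiff ℝ 6 γ₂)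
    (a b c : ℝ) (k : ℕ) (hk : 1 ≤ k) (hk' : k ≤ 6) (s : ℝ) :
    iteratedDeriv k (fun x => a * γ₁ x + b * γ₂ x + c) s
      = a * iteratedDeriv k γ₁ s + b * iteratedDeriv k γ₂ s := by
  have c1 : ContDiff ℝ k (fun x => a * γ₁ x) :=
    (contDiff_const.mul (h1.of_le (by exact_mod_cast hk')))
  have c2 : ContDiff ℝ k (fun x => b * γ₂ x) :=
    (contDiff_const.mul (h2.of_le (by exact_mod_cast hk')))
  rw [myIteratedDeriv_add' (c1.add c2) contDiff_const,
    myIteratedDeriv_add' c1 c2,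
    myIteratedDeriv_const_mul' (h1.of_le (by exact_mod_cast hk')),
    myIteratedDeriv_const_mul' (h2.of_le (by exact_mod_cast hk')),
    myIteratedDeriv_const']
  simp [Nat.one_le_iff_ne_zero.mp hk]
/-- the six monomial functions along the curve -/
def phi (γ : ℝ → ℝ × ℝ) : Fin 6 → ℝ → ℝ :=
  ![fun t => (γ t).1 ^ 2, fun t => (γ t).1 * (γ t).2, fun t => (γ t).2 ^ 2,
    fun t => (γ t).1, fun t => (γ t).2, fun _ => 1]

lemma conicEval_eq_sum (a b c d e f : ℝ) (γ : ℝ → ℝ × ℝ) (t : ℝ) :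
    conicEval a b c d e f (γ t) = ∑ j, ![a, b, c, d, e, f] j * phi γ j t := by
  rw [Fin.sum_univ_six]
  show _ = a * ((γ t).1 ^ 2) + b * ((γ t).1 * (γ t).2) + c * ((γ t).2 ^ 2)
      + d * (γ t).1 + e * (γ t).2 + f * 1
  rw [conicEval]; ring

lemma phi_contDiff {γ : ℝ → ℝ × ℝ} (hγ : ContDiff ℝ 6 γ) (j : Fin 6) :
    ContDiff ℝ 6 (phi γ j) := by
  have h1 : ContDiff ℝ 6 (fun t => (γ t).1) := contDiff_fst.comp hγ
  have h2 : ContDiff ℝ 6 (fun t => (γ t).2) := contDiff_snd.comp hγ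
  fin_cases j <;> simp [phi] <;>
    first
      | exact h1.pow 2
      | exact h1.mul h2
      | exact h2.pow 2
      | exact h1
      | exact h2
      | exact contDiff_const

noncomputable def Vd (γ : ℝ → ℝ × ℝ) (k : ℕ) (t : ℝ) : Fin 6 → ℝ :=
  fun j => iteratedDeriv k (phi γ j) t

noncomputable def M6 (γ : ℝ → ℝ × ℝ) (t : ℝ) (w : Fin 6 → ℝ) : Matrix (Fin 6) (Fin 6) ℝ :=
  Matrix.of (Fin.snoc (fun k : Fin 5 => Vd γ k t) w)

lemma M6_castSucc (γ : ℝ → ℝ × ℝ) (t : ℝ) (w : Fin 6 → ℝ) (k : Fin 5) :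
    M6 γ t w k.castSucc = Vd γ k t := by
  show (Fin.snoc (fun k : Fin 5 => Vd γ k t) w : Fin 6 → Fin 6 → ℝ) k.castSucc = _
  exact Fin.snoc_castSucc _ _ _

lemma M6_last (γ : ℝ → ℝ × ℝ) (t : ℝ) (w : Fin 6 → ℝ) :
    M6 γ t w (Fin.last 5) = w := by
  show (Fin.snoc (fun k : Fin 5 => Vd γ k t) w : Fin 6 → Fin 6 → ℝ) (Fin.last 5) = _
  exact Fin.snoc_last _ _

lemma M6_eq_updateRow (γ : ℝ → ℝ × ℝ) (t : ℝ) (w : Fin 6 → ℝ) :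
    M6 γ t w = (M6 γ t 0).updateRow (Fin.last 5) w := by
  apply Matrix.ext
  intro i j
  induction i using Fin.lastCases with
  | last =>
    simp [Matrix.updateRow_apply]
    exact congrFun (M6_last γ t w) j
  | cast k =>
    rw [Matrix.updateRow_apply, if_neg (Fin.castSucc_lt_last k).ne]
    rw [M6_castSucc, M6_castSucc]

noncomputable def cvec (γ : ℝ → ℝ × ℝ) (t : ℝ) : Fin 6 → ℝ :=
  fun j => (M6 γ t (Pi.single j 1)).det

lemma dot_cvec (γ : ℝ → ℝ × ℝ) (t : ℝ) (w : Fin 6 → ℝ) :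
    ∑ j, w j * cvec γ t j = (M6 γ t w).det := by
  have h1 : (M6 γ t w).det = ((M6 γ t 0).updateRow (Fin.last 5) w).det := by
    rw [← M6_eq_updateRow]
  have h2 : ∀ j, cvec γ t j = ((M6 γ t 0).updateRow (Fin.last 5) (Pi.single j 1)).det := by
    intro j; rw [cvec, ← M6_eq_updateRow]
  rw [h1, myDet_row_linear]
  exact Finset.sum_congr rfl fun j _ => by rw [h2 j]

lemma cvec_orth (γ : ℝ → ℝ × ℝ) (t : ℝ) (k : Fin 5) :
    ∑ j, cvec γ t j * Vd γ k t j = 0 := by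
  have : ∑ j, Vd γ k t j * cvec γ t j = (M6 γ t (Vd γ k t)).det := dot_cvec γ t _
  have hz : (M6 γ t (Vd γ k t)).det = 0 := by
    apply Matrix.det_zero_of_row_eq (Fin.castSucc_lt_last k).ne
    rw [M6_castSucc, M6_last]
  calc ∑ j, cvec γ t j * Vd γ k t j = ∑ j, Vd γ k t j * cvec γ t j :=
        Finset.sum_congr rfl fun j _ => mul_comm _ _
    _ = (M6 γ t (Vd γ k t)).det := this
    _ = 0 := hz

lemma cvec_contDiff {γ : ℝ → ℝ × ℝ} (hγ : ContDiff ℝ 6 γ) (j : Fin 6) :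
    ContDiff ℝ 1 (fun t => cvec γ t j) := by
  apply myContDiff_det
  intro i j'
  induction i using Fin.lastCases with
  | last =>
    have : (fun t => M6 γ t (Pi.single j 1) (Fin.last 5) j') = fun _ : ℝ => (Pi.single j (1:ℝ) : Fin 6 → ℝ) j' := by
      funext t; rw [M6_last]
    rw [this]; exact contDiff_const
  | cast k =>
    have : (fun t => M6 γ t (Pi.single j 1) k.castSucc j')
        = fun t => iteratedDeriv k (phi γ j') t := by
      funext t; rw [M6_castSucc]; rfl
    rw [this]
    exact myContDiff_iteratedDeriv (phi_contDiff hγ j') k (by omega)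


lemma key_surj {γ : ℝ → ℝ × ℝ} (hγ : ContDiff ℝ 6 γ) (t : ℝ)
    (hD : iteratedDeriv 1 (fun s => (γ s).1) t * iteratedDeriv 2 (fun s => (γ s).2) t
      - iteratedDeriv 1 (fun s => (γ s).2) t * iteratedDeriv 2 (fun s => (γ s).1) t ≠ 0) :
    ∀ y : Fin 5 → ℝ, ∃ w : Fin 6 → ℝ, ∀ k : Fin 5, ∑ j, Vd γ (k : ℕ) t j * w j = y k := by
  classical
  set γ₁ : ℝ → ℝ := fun s => (γ s).1 with hγ₁
  set γ₂ : ℝ → ℝ := fun s => (γ s).2 with hγ₂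
  have h1 : ContDiff ℝ 6 γ₁ := contDiff_fst.comp hγ
  have h2 : ContDiff ℝ 6 γ₂ := contDiff_snd.comp hγ
  set p1 := γ₁ t with hp1
  set p2 := γ₂ t with hp2
  set u1 := iteratedDeriv 1 γ₁ t with hu1
  set u2 := iteratedDeriv 1 γ₂ t with hu2
  set v1 := iteratedDeriv 2 γ₁ t with hv1
  set v2 := iteratedDeriv 2 γ₂ t with hv2
  set D := u1 * v2 - u2 * v1 with hDdef
  have hDne : D ≠ 0 := hD
  set cg : ℝ := -(v2 * p1) + v1 * p2 with hcg
  set ch : ℝ := u2 * p1 - u1 * p2 with hch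
  set gt : ℝ → ℝ := fun s => v2 * γ₁ s + (-v1) * γ₂ s + cg with hgt
  set ht : ℝ → ℝ := fun s => (-u2) * γ₁ s + u1 * γ₂ s + ch with hht
  have hgtC : ContDiff ℝ 6 gt :=
    ((contDiff_const.mul h1).add (contDiff_const.mul h2)).add contDiff_const
  have hhtC : ContDiff ℝ 6 ht :=
    ((contDiff_const.mul h1).add (contDiff_const.mul h2)).add contDiff_const
  -- values at t
  have hg0 : iteratedDeriv 0 gt t = 0 := by
    rw [iteratedDeriv_zero]; simp only [hgt, hcg, hp1, hp2]; ring
  have hh0 : iteratedDeriv 0 ht t = 0 := by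
    rw [iteratedDeriv_zero]; simp only [hht, hch, hp1, hp2]; ring
  have hg1 : iteratedDeriv 1 gt t = D := by
    rw [hgt, affine_iteratedDeriv h1 h2 _ _ _ 1 le_rfl (by norm_num) t]
    rw [hDdef, ← hu1, ← hu2]; ring
  have hh1 : iteratedDeriv 1 ht t = 0 := by
    rw [hht, affine_iteratedDeriv h1 h2 _ _ _ 1 le_rfl (by norm_num) t]
    rw [← hu1, ← hu2]; ring
  have hh2 : iteratedDeriv 2 ht t = D := by
    rw [hht, affine_iteratedDeriv h1 h2 _ _ _ 2 (by norm_num) (by norm_num) t]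
    rw [hDdef, ← hv1, ← hv2]; ring
  -- the five test functions
  set FF : Fin 5 → ℝ → ℝ :=
    ![fun _ => 1, gt, ht, fun s => gt s * ht s, fun s => ht s * ht s] with hFF
  -- the matrix of jets
  set T : Matrix (Fin 5) (Fin 5) ℝ :=
    Matrix.of (fun i k : Fin 5 => iteratedDeriv (k : ℕ) (FF i) t) with hT
  have hgt0 : gt t = 0 := by rw [← iteratedDeriv_zero (f := gt)]; exact hg0
  have hht0 : ht t = 0 := by rw [← iteratedDeriv_zero (f := ht)]; exact hh0
  have T30 : iteratedDeriv 0 (fun s => gt s * ht s) t = 0 := by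
    rw [iteratedDeriv_zero]; simp only [hgt0, zero_mul]
  have T31 : iteratedDeriv 1 (fun s => gt s * ht s) t = 0 := by
    rw [leibniz1 hgtC hhtC t, hg0, hh0]; ring
  have T32 : iteratedDeriv 2 (fun s => gt s * ht s) t = 0 := by
    rw [leibniz2 hgtC hhtC t, hg0, hh0, hh1]; ring
  have T33 : iteratedDeriv 3 (fun s => gt s * ht s) t = 3 * D ^ 2 := by
    rw [leibniz3 hgtC hhtC t, hg0, hh0, hh1, hh2, hg1]; ring
  have T40 : iteratedDeriv 0 (fun s => ht s * ht s) t = 0 := by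
    rw [iteratedDeriv_zero]; simp only [hht0, zero_mul]
  have T41 : iteratedDeriv 1 (fun s => ht s * ht s) t = 0 := by
    rw [leibniz1 hhtC hhtC t, hh0, hh1]; ring
  have T42 : iteratedDeriv 2 (fun s => ht s * ht s) t = 0 := by
    rw [leibniz2 hhtC hhtC t, hh0, hh1]; ring
  have T43 : iteratedDeriv 3 (fun s => ht s * ht s) t = 0 := by
    rw [leibniz3 hhtC hhtC t, hh0, hh1, hh2]; ring
  have T44 : iteratedDeriv 4 (fun s => ht s * ht s) t = 6 * D ^ 2 := by
    rw [leibniz4 hhtC hhtC t, hh0, hh1, hh2]; ring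
  have hT0 : T.BlockTriangular id := by
    intro i k hik
    fin_cases i <;> fin_cases k <;>
      first
        | exact absurd hik (by decide)
        | exact hg0
        | exact hh0
        | exact hh1
        | exact T30
        | exact T31
        | exact T32
        | exact T40
        | exact T41
        | exact T42
        | exact T43
  have hTdiag0 : T 0 0 = 1 := by
    show iteratedDeriv 0 (fun _ : ℝ => (1:ℝ)) t = 1
    rw [iteratedDeriv_zero]
  have hTdiag1 : T 1 1 = D := hg1
  have hTdiag2 : T 2 2 = D := hh2
  have hTdiag3 : T 3 3 = 3 * D ^ 2 := T33
  have hTdiag4 : T 4 4 = 6 * D ^ 2 := T44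
  have hTdet : T.det ≠ 0 := by
    rw [Matrix.det_of_upperTriangular hT0]
    rw [Fin.prod_univ_five]
    rw [hTdiag0, hTdiag1, hTdiag2, hTdiag3, hTdiag4]
    simp only [one_mul]
    positivity
  set W : Fin 5 → Fin 6 → ℝ :=
    ![![0,0,0,0,0,1],
      ![0,0,0,v2,-v1,cg],
      ![0,0,0,-u2,u1,ch],
      ![v2*(-u2), v2*u1 + (-v1)*(-u2), (-v1)*u1, v2*ch + cg*(-u2), (-v1)*ch + cg*u1, cg*ch],
      ![(-u2)*(-u2), 2*((-u2)*u1), u1*u1, 2*((-u2)*ch), 2*(u1*ch), ch*ch]] with hW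
  have hWF : ∀ i : Fin 5, (fun s => ∑ j, W i j * phi γ j s) = FF i := by
    intro i
    funext s
    fin_cases i <;> rw [Fin.sum_univ_six]
    · show (0:ℝ) * ((γ s).1^2) + 0 * ((γ s).1*(γ s).2) + 0 * ((γ s).2^2)
        + 0 * (γ s).1 + 0 * (γ s).2 + 1 * 1 = 1
      ring
    · show (0:ℝ) * ((γ s).1^2) + 0 * ((γ s).1*(γ s).2) + 0 * ((γ s).2^2)
        + v2 * (γ s).1 + (-v1) * (γ s).2 + cg * 1 = gt s
      rw [hgt]; ring
    · show (0:ℝ) * ((γ s).1^2) + 0 * ((γ s).1*(γ s).2) + 0 * ((γ s).2^2)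
        + (-u2) * (γ s).1 + u1 * (γ s).2 + ch * 1 = ht s
      rw [hht]; ring
    · show (v2*(-u2)) * ((γ s).1^2) + (v2*u1 + (-v1)*(-u2)) * ((γ s).1*(γ s).2)
        + ((-v1)*u1) * ((γ s).2^2) + (v2*ch + cg*(-u2)) * (γ s).1
        + ((-v1)*ch + cg*u1) * (γ s).2 + (cg*ch) * 1 = gt s * ht s
      rw [hgt, hht]; ring
    · show ((-u2)*(-u2)) * ((γ s).1^2) + (2*((-u2)*u1)) * ((γ s).1*(γ s).2)
        + (u1*u1) * ((γ s).2^2) + (2*((-u2)*ch)) * (γ s).1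
        + (2*(u1*ch)) * (γ s).2 + (ch*ch) * 1 = ht s * ht s
      rw [hht]; ring
  have hJsum : ∀ (w : Fin 6 → ℝ) (k : Fin 5),
      ∑ j, Vd γ (k : ℕ) t j * w j
        = iteratedDeriv (k : ℕ) (fun s => ∑ j, w j * phi γ j s) t := by
    intro w k
    have hc : ∀ j : Fin 6, ContDiff ℝ ((k : ℕ) : ℕ) (fun s => w j * phi γ j s) := fun j =>
      contDiff_const.mul ((phi_contDiff hγ j).of_le
        (by exact_mod_cast (show ((k:ℕ):ℕ∞) ≤ ((6:ℕ):ℕ∞) by exact_mod_cast (by omega : (k:ℕ) ≤ 6))))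
    rw [myIteratedDeriv_sum Finset.univ (fun j _ => hc j) t]
    refine Finset.sum_congr rfl fun j _ => ?_
    rw [myIteratedDeriv_const_mul ((phi_contDiff hγ j).of_le
      (by exact_mod_cast (show ((k:ℕ):ℕ∞) ≤ ((6:ℕ):ℕ∞) by exact_mod_cast (by omega : (k:ℕ) ≤ 6)))) (w j) t]
    exact mul_comm _ _
  have hJW : ∀ (i : Fin 5) (k : Fin 5), ∑ j, Vd γ (k : ℕ) t j * W i j = T i k := by
    intro i k
    rw [hJsum (W i) k, hWF i]
    rfl
  -- surjectivity via inverse of T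
  intro y
  have hUnit : IsUnit T.det := isUnit_iff_ne_zero.mpr hTdet
  set z : Fin 5 → ℝ := Matrix.vecMul y T⁻¹ with hz
  have hzT : Matrix.vecMul z T = y := by
    rw [hz, Matrix.vecMul_vecMul, Matrix.nonsing_inv_mul T hUnit, Matrix.vecMul_one]
  refine ⟨fun j => ∑ i, z i * W i j, fun k => ?_⟩
  calc ∑ j, Vd γ (k : ℕ) t j * (∑ i, z i * W i j)
      = ∑ j, ∑ i, z i * (Vd γ (k : ℕ) t j * W i j) := by
        refine Finset.sum_congr rfl fun j _ => ?_
        rw [Finset.mul_sum]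
        exact Finset.sum_congr rfl fun i _ => by ring
    _ = ∑ i, ∑ j, z i * (Vd γ (k : ℕ) t j * W i j) := Finset.sum_comm
    _ = ∑ i, z i * T i k := by
        refine Finset.sum_congr rfl fun i _ => ?_
        rw [← Finset.mul_sum, hJW i k]
    _ = Matrix.vecMul z T k := by
        rw [Matrix.vecMul]
        simp [dotProduct]
    _ = y k := by rw [hzT]

lemma pointwise_struct {γ : ℝ → ℝ × ℝ} (hγ : ContDiff ℝ 6 γ) (t : ℝ)
    (hD : iteratedDeriv 1 (fun s => (γ s).1) t * iteratedDeriv 2 (fun s => (γ s).2) t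
      - iteratedDeriv 1 (fun s => (γ s).2) t * iteratedDeriv 2 (fun s => (γ s).1) t ≠ 0) :
    cvec γ t ≠ 0 ∧
      ∀ w : Fin 6 → ℝ, (∀ k : Fin 5, ∑ j, Vd γ (k : ℕ) t j * w j = 0) →
        ∃ μ : ℝ, w = μ • cvec γ t := by
  classical
  have SURJ := key_surj hγ t hD
  set r : Fin 5 → (Fin 6 → ℝ) := fun k => Vd γ (k : ℕ) t with hr
  have hrows : ∀ y : Fin 5 → ℝ, (∀ j, ∑ k, y k * r k j = 0) → y = 0 := by
    intro y hy
    funext k₀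
    obtain ⟨w, hw⟩ := SURJ (Pi.single k₀ 1)
    have h0 : ∑ j, (∑ k, y k * r k j) * w j = 0 := by
      refine Finset.sum_eq_zero fun j _ => ?_
      rw [hy j, zero_mul]
    have h1 : ∑ k, y k * (∑ j, r k j * w j) = 0 := by
      calc ∑ k, y k * (∑ j, r k j * w j)
          = ∑ k, ∑ j, y k * (r k j * w j) :=
            Finset.sum_congr rfl fun k _ => Finset.mul_sum _ _ _
        _ = ∑ j, ∑ k, y k * (r k j * w j) := Finset.sum_comm
        _ = ∑ j, (∑ k, y k * r k j) * w j := Finset.sum_congr rfl fun j _ => by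
              rw [Finset.sum_mul]
              exact Finset.sum_congr rfl fun k _ => by ring
        _ = 0 := h0
    have h2 : ∑ k, y k * (Pi.single k₀ 1 : Fin 5 → ℝ) k = 0 := by
      rw [← h1]
      exact Finset.sum_congr rfl fun k _ => by rw [hw k]
    have h3 : ∑ k, y k * (Pi.single k₀ 1 : Fin 5 → ℝ) k = y k₀ := by
      rw [Finset.sum_eq_single k₀]
      · simp
      · intro b _ hb
        simp [Pi.single_apply, hb]
      · simp
    rw [h3] at h2
    simpa using h2
  have hspan : Submodule.span ℝ (Set.range r) ≠ ⊤ := by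
    intro h
    have h6 := finrank_le_of_span_eq_top h
    rw [Module.finrank_fin_fun] at h6
    simp at h6
  obtain ⟨wstar, hwstar⟩ : ∃ w, w ∉ Submodule.span ℝ (Set.range r) := by
    by_contra h
    push_neg at h
    exact hspan (Submodule.eq_top_iff'.mpr h)
  have hdet : (M6 γ t wstar).det ≠ 0 := by
    intro h0
    obtain ⟨y, hy0, hyv⟩ := (Matrix.exists_vecMul_eq_zero_iff).mpr h0
    have hyj : ∀ j, (∑ k : Fin 5, y k.castSucc * r k j) + y (Fin.last 5) * wstar j = 0 := by
      intro j
      have hj := congrFun hyv j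
      rw [Pi.zero_apply] at hj
      rw [Matrix.vecMul] at hj
      rw [show dotProduct y (fun i => M6 γ t wstar i j)
          = ∑ i : Fin 6, y i * M6 γ t wstar i j from rfl] at hj
      rw [Fin.sum_univ_castSucc] at hj
      rw [M6_last] at hj
      rw [← hj]
      refine congrArg₂ (· + ·) (Finset.sum_congr rfl fun k _ => ?_) rfl
      rw [M6_castSucc]
    by_cases hlast : y (Fin.last 5) = 0
    · have hzero : (fun k : Fin 5 => y k.castSucc) = 0 := by
        apply hrows
        intro j
        have := hyj j
        rw [hlast, zero_mul, add_zero] at this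
        exact this
      apply hy0
      funext i
      induction i using Fin.lastCases with
      | last => exact hlast
      | cast k => exact congrFun hzero k
    · apply hwstar
      have hwexp : wstar = ∑ k : Fin 5, (-(y k.castSucc) / y (Fin.last 5)) • r k := by
        funext j
        rw [Finset.sum_apply]
        simp only [Pi.smul_apply, smul_eq_mul]
        have hstep : ∀ k : Fin 5, -(y k.castSucc) / y (Fin.last 5) * r k j
            = -(y k.castSucc * r k j) / y (Fin.last 5) := fun k => by ring
        rw [Finset.sum_congr rfl fun k _ => hstep k, ← Finset.sum_div]
        rw [eq_div_iff hlast]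
        have h5 := hyj j
        have hneg : ∑ k : Fin 5, -(y k.castSucc * r k j)
            = -∑ k : Fin 5, y k.castSucc * r k j := Finset.sum_neg_distrib _
        rw [hneg]
        linarith
      rw [hwexp]
      exact Submodule.sum_mem _ fun k _ =>
        Submodule.smul_mem _ _ (Submodule.subset_span ⟨k, rfl⟩)
  have hcne : cvec γ t ≠ 0 := by
    intro h0
    apply hdet
    rw [← dot_cvec]
    refine Finset.sum_eq_zero fun j _ => ?_
    rw [h0]
    simp
  set Mt : Matrix (Fin 5) (Fin 6) ℝ := Matrix.of (fun (k : Fin 5) (j : Fin 6) => Vd γ (k : ℕ) t j)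
    with hMt
  set J := Mt.mulVecLin with hJ
  have hJapp : ∀ (w : Fin 6 → ℝ) (k : Fin 5), J w k = ∑ j, Vd γ (k : ℕ) t j * w j := by
    intro w k
    simp [hJ, hMt, Matrix.mulVecLin_apply, Matrix.mulVec, dotProduct]
  have hsurj : Function.Surjective J := by
    intro y
    obtain ⟨w, hw⟩ := SURJ y
    exact ⟨w, funext fun k => (hJapp w k).trans (hw k)⟩
  have hker : Module.finrank ℝ (LinearMap.ker J) = 1 := by
    have h1 := LinearMap.finrank_range_add_finrank_ker J
    rw [LinearMap.range_eq_top.mpr hsurj, finrank_top] at h1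
    rw [Module.finrank_fin_fun, Module.finrank_fin_fun] at h1
    omega
  have hcmem : cvec γ t ∈ LinearMap.ker J := by
    rw [LinearMap.mem_ker]
    funext k
    rw [hJapp]
    rw [show (0 : Fin 5 → ℝ) k = 0 from rfl]
    rw [← cvec_orth γ t k]
    exact Finset.sum_congr rfl fun j _ => mul_comm _ _
  have hspan_eq : Submodule.span ℝ {cvec γ t} = LinearMap.ker J := by
    apply Submodule.eq_of_le_of_finrank_le
    · rw [Submodule.span_le, Set.singleton_subset_iff]
      exact hcmem
    · rw [hker, finrank_span_singleton hcne]
  refine ⟨hcne, fun w hw => ?_⟩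
  have hwk : w ∈ LinearMap.ker J :=
    LinearMap.mem_ker.mpr (funext fun k => (hJapp w k).trans (hw k))
  rw [← hspan_eq] at hwk
  obtain ⟨μ, hμ⟩ := Submodule.mem_span_singleton.mp hwk
  exact ⟨μ, hμ.symm⟩

lemma sum_iteratedDeriv {γ : ℝ → ℝ × ℝ} (hγ : ContDiff ℝ 6 γ) (w : Fin 6 → ℝ) (k : ℕ)
    (hk : k ≤ 6) (t : ℝ) :
    iteratedDeriv k (fun s => ∑ j, w j * phi γ j s) t = ∑ j, w j * Vd γ k t j := by
  have hc : ∀ j : Fin 6, ContDiff ℝ k (phi γ j) := fun j =>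
    (phi_contDiff hγ j).of_le (by exact_mod_cast hk)
  rw [myIteratedDeriv_sum Finset.univ (fun j _ => contDiff_const.mul (hc j)) t]
  exact Finset.sum_congr rfl fun j _ => myIteratedDeriv_const_mul (hc j) (w j) t

/-- A connected `C⁶` planar curve (here parametrized by all of `ℝ`) with nonvanishing
curvature, all of whose points are sextactic (at every parameter `t₀` some nontrivial conic
has contact of order at least six with the curve, i.e. the composed function vanishes to
order `≥ 6`), is contained in a conic. -/
theorem curve_all_points_sextactic_is_conic
    (γ : ℝ → ℝ × ℝ) (hγ : ContDiff ℝ 6 γ)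
    (hreg : ∀ t : ℝ,
      (deriv γ t).1 * (iteratedDeriv 2 γ t).2
        - (deriv γ t).2 * (iteratedDeriv 2 γ t).1 ≠ 0)
    (hsext : ∀ t₀ : ℝ, ∃ a b c d e f : ℝ, (a, b, c, d, e, f) ≠ 0 ∧
      ∀ k : ℕ, k ≤ 5 →
        iteratedDeriv k (fun t => conicEval a b c d e f (γ t)) t₀ = 0) :
    ∃ a b c d e f : ℝ, (a, b, c, d, e, f) ≠ 0 ∧
      ∀ t : ℝ, conicEval a b c d e f (γ t) = 0 := by
  classical
  have h1C : ContDiff ℝ 6 (fun s => (γ s).1) := contDiff_fst.comp hγ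
  have h2C : ContDiff ℝ 6 (fun s => (γ s).2) := contDiff_snd.comp hγ
  -- translate the regularity hypothesis
  have hD : ∀ t : ℝ,
      iteratedDeriv 1 (fun s => (γ s).1) t * iteratedDeriv 2 (fun s => (γ s).2) t
      - iteratedDeriv 1 (fun s => (γ s).2) t * iteratedDeriv 2 (fun s => (γ s).1) t ≠ 0 := by
    intro t
    have e1 := myIteratedDeriv_prod hγ (k := 1) (by norm_num) t
    have e2 := myIteratedDeriv_prod hγ (k := 2) (by norm_num) t
    have h := hreg t
    rw [← iteratedDeriv_one (f := γ)] at h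
    rw [e1, e2] at h
    exact h
  have PS := fun t => pointwise_struct hγ t (hD t)
  -- order ≤ 4 orthogonality
  have Hk : ∀ (k : ℕ), k ≤ 4 → ∀ s, ∑ j, cvec γ s j * Vd γ k s j = 0 := by
    intro k hk s
    have := cvec_orth γ s ⟨k, by omega⟩
    simpa using this
  -- order 5 orthogonality from the sextactic hypothesis
  have H5 : ∀ s, ∑ j, cvec γ s j * Vd γ 5 s j = 0 := by
    intro s
    obtain ⟨a, b, c, d, e, f, hne, hvan⟩ := hsext s
    set w : Fin 6 → ℝ := ![a, b, c, d, e, f] with hw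
    have hfun : (fun u => conicEval a b c d e f (γ u)) = fun u => ∑ j, w j * phi γ j u :=
      funext fun u => conicEval_eq_sum a b c d e f γ u
    have hvan' : ∀ k : ℕ, k ≤ 5 → ∑ j, w j * Vd γ k s j = 0 := by
      intro k hk
      rw [← sum_iteratedDeriv hγ w k (by omega) s, ← hfun]
      exact hvan k hk
    have hwker : ∀ k : Fin 5, ∑ j, Vd γ (k : ℕ) s j * w j = 0 := by
      intro k
      rw [show ∑ j, Vd γ (k : ℕ) s j * w j = ∑ j, w j * Vd γ (k : ℕ) s j from
        Finset.sum_congr rfl fun j _ => mul_comm _ _]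
      exact hvan' k (by omega)
    obtain ⟨μ, hμ⟩ := (PS s).2 w hwker
    have hwne : w ≠ 0 := by
      intro h0
      apply hne
      have ha : a = 0 := congrFun h0 0
      have hb : b = 0 := congrFun h0 1
      have hc : c = 0 := congrFun h0 2
      have hd : d = 0 := congrFun h0 3
      have he : e = 0 := congrFun h0 4
      have hf : f = 0 := congrFun h0 5
      rw [ha, hb, hc, hd, he, hf]
      rfl
    have hμne : μ ≠ 0 := by
      intro h0
      apply hwne
      rw [hμ, h0, zero_smul]
    have h5w : ∑ j, w j * Vd γ 5 s j = 0 := hvan' 5 le_rfl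
    rw [hμ] at h5w
    have : μ * ∑ j, cvec γ s j * Vd γ 5 s j = 0 := by
      rw [Finset.mul_sum, ← h5w]
      exact Finset.sum_congr rfl fun j _ => by simp [smul_eq_mul]; ring
    exact (mul_eq_zero.mp this).resolve_left hμne
  -- derivative of cvec
  set cd : ℝ → Fin 6 → ℝ := fun t j => deriv (fun s => cvec γ s j) t with hcd
  have hcvecD : ∀ j t, HasDerivAt (fun s => cvec γ s j) (cd t j) t := by
    intro j t
    exact ((cvec_contDiff hγ j).differentiable (by norm_num)).differentiableAt.hasDerivAt
  have hVdD : ∀ (k : ℕ), k ≤ 4 → ∀ (j : Fin 6) (t : ℝ),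
      HasDerivAt (fun s => Vd γ k s j) (Vd γ (k + 1) t j) t := by
    intro k hk j t
    exact hA' (phi_contDiff hγ j) k hk t
  -- differentiating the orthogonality relations
  have hcdker : ∀ t, ∀ k : Fin 5, ∑ j, Vd γ (k : ℕ) t j * cd t j = 0 := by
    intro t k
    have hk4 : (k : ℕ) ≤ 4 := by omega
    have hprod : HasDerivAt (fun s => ∑ j, cvec γ s j * Vd γ (k : ℕ) s j)
        (∑ j, (cd t j * Vd γ (k : ℕ) t j + cvec γ t j * Vd γ ((k : ℕ) + 1) t j)) t := by
      apply HasDerivAt.fun_sum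
      intro j _
      exact (hcvecD j t).mul (hVdD k hk4 j t)
    have hzero : HasDerivAt (fun s => ∑ j, cvec γ s j * Vd γ (k : ℕ) s j) 0 t := by
      have hfun0 : (fun s => ∑ j, cvec γ s j * Vd γ (k : ℕ) s j) = fun _ => (0:ℝ) :=
        funext fun s => Hk k hk4 s
      rw [hfun0]
      exact hasDerivAt_const t 0
    have := hprod.unique hzero
    have hsplit : ∑ j, (cd t j * Vd γ (k : ℕ) t j + cvec γ t j * Vd γ ((k : ℕ) + 1) t j)
        = ∑ j, cd t j * Vd γ (k : ℕ) t j + ∑ j, cvec γ t j * Vd γ ((k : ℕ) + 1) t j :=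
      Finset.sum_add_distrib
    rw [hsplit] at this
    have h2 : ∑ j, cvec γ t j * Vd γ ((k : ℕ) + 1) t j = 0 := by
      rcases Nat.lt_or_ge (k : ℕ) 4 with h | h
      · exact Hk ((k : ℕ) + 1) (by omega) t
      · have hk5 : (k : ℕ) + 1 = 5 := by omega
        rw [hk5]
        exact H5 t
    rw [h2, add_zero] at this
    rw [show ∑ j, Vd γ (k : ℕ) t j * cd t j = ∑ j, cd t j * Vd γ (k : ℕ) t j from
      Finset.sum_congr rfl fun j _ => mul_comm _ _]
    linarith [this]
  -- cd t is proportional to cvec t, with ratio lam t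
  set lam : ℝ → ℝ := fun t => (∑ j, cd t j * cvec γ t j) / (∑ j, cvec γ t j ^ 2) with hlam
  have hdenom : ∀ t, 0 < ∑ j, cvec γ t j ^ 2 := by
    intro t
    obtain ⟨j₀, hj₀⟩ := Function.ne_iff.mp (PS t).1
    apply Finset.sum_pos' (fun j _ => sq_nonneg _)
    refine ⟨j₀, Finset.mem_univ _, ?_⟩
    have hne0 : cvec γ t j₀ ≠ 0 := by simpa using hj₀
    exact lt_of_le_of_ne (sq_nonneg _) (Ne.symm (pow_ne_zero 2 hne0))
  have hcdlam : ∀ t j, cd t j = lam t * cvec γ t j := by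
    intro t j
    obtain ⟨μ, hμ⟩ := (PS t).2 (cd t) (hcdker t)
    have hl : lam t = μ := by
      have hldef : lam t = (∑ j, cd t j * cvec γ t j) / (∑ j, cvec γ t j ^ 2) := rfl
      rw [hldef]
      have hnum : ∑ j, cd t j * cvec γ t j = μ * ∑ j, cvec γ t j ^ 2 := by
        rw [Finset.mul_sum]
        refine Finset.sum_congr rfl fun j _ => ?_
        rw [hμ]
        simp only [Pi.smul_apply, smul_eq_mul]
        ring
      rw [hnum, mul_div_assoc, div_self (hdenom t).ne', mul_one]
    rw [hl, hμ]
    simp only [Pi.smul_apply, smul_eq_mul]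
  -- continuity of lam
  have hcvecCont : ∀ j, Continuous (fun t => cvec γ t j) := fun j =>
    (cvec_contDiff hγ j).continuous
  have hcdCont : ∀ j, Continuous (fun t => cd t j) := by
    intro j
    exact (contDiff_one_iff_deriv.mp (cvec_contDiff hγ j)).2
  have hlamCont : Continuous lam := by
    apply Continuous.div
    · exact continuous_finset_sum _ fun j _ => (hcdCont j).mul (hcvecCont j)
    · exact continuous_finset_sum _ fun j _ => (hcvecCont j).pow 2
    · exact fun t => (hdenom t).ne'
  -- the integrating factor
  set L : ℝ → ℝ := fun t => ∫ s in (0:ℝ)..t, lam s with hL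
  have hLD : ∀ t, HasDerivAt L (lam t) t := by
    intro t
    exact intervalIntegral.integral_hasDerivAt_right
      (hlamCont.intervalIntegrable _ _)
      (hlamCont.stronglyMeasurableAtFilter _ _)
      hlamCont.continuousAt
  have hconst : ∀ j : Fin 6, ∀ t, Real.exp (-L t) * cvec γ t j = cvec γ 0 j := by
    intro j
    have hq : ∀ t, HasDerivAt (fun u => Real.exp (-L u) * cvec γ u j) 0 t := by
      intro t
      have he : HasDerivAt (fun u => Real.exp (-L u)) (Real.exp (-L t) * (-lam t)) t :=
        ((hLD t).neg).exp
      have := he.fun_mul (hcvecD j t)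
      refine this.congr_deriv ?_
      rw [hcdlam t j]
      ring
    have hdiff : Differentiable ℝ (fun u => Real.exp (-L u) * cvec γ u j) :=
      fun t => (hq t).differentiableAt
    have hder : ∀ t, deriv (fun u => Real.exp (-L u) * cvec γ u j) t = 0 :=
      fun t => (hq t).deriv
    intro t
    have := is_const_of_deriv_eq_zero hdiff hder t 0
    rw [this]
    have hL0 : L 0 = 0 := intervalIntegral.integral_same
    rw [hL0]
    simp
  -- conclusion
  refine ⟨cvec γ 0 0, cvec γ 0 1, cvec γ 0 2, cvec γ 0 3, cvec γ 0 4, cvec γ 0 5, ?_, ?_⟩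
  · intro h0
    apply (PS 0).1
    rw [show (0 : ℝ × ℝ × ℝ × ℝ × ℝ × ℝ)
        = ((0:ℝ), (0:ℝ), (0:ℝ), (0:ℝ), (0:ℝ), (0:ℝ)) from rfl] at h0
    rw [Prod.mk.injEq, Prod.mk.injEq, Prod.mk.injEq, Prod.mk.injEq, Prod.mk.injEq] at h0
    obtain ⟨ha, hb, hc, hd, he, hf⟩ := h0
    funext j
    simp only [Pi.zero_apply]
    fin_cases j
    · exact ha
    · exact hb
    · exact hc
    · exact hd
    · exact he
    · exact hf
  · intro t
    rw [conicEval_eq_sum, Fin.sum_univ_six]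
    show cvec γ 0 0 * phi γ 0 t + cvec γ 0 1 * phi γ 1 t + cvec γ 0 2 * phi γ 2 t
      + cvec γ 0 3 * phi γ 3 t + cvec γ 0 4 * phi γ 4 t + cvec γ 0 5 * phi γ 5 t = 0
    have h0 : ∑ j, cvec γ t j * phi γ j t = 0 := by
      have h' := Hk 0 (by norm_num) t
      rw [show ∑ j, cvec γ t j * Vd γ 0 t j = ∑ j, cvec γ t j * phi γ j t from
        Finset.sum_congr rfl fun j _ => by rw [Vd, iteratedDeriv_zero]] at h'
      exact h'
    rw [Fin.sum_univ_six] at h0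
    linear_combination Real.exp (-L t) * h0 - phi γ 0 t * hconst 0 t
      - phi γ 1 t * hconst 1 t - phi γ 2 t * hconst 2 t - phi γ 3 t * hconst 3 t
      - phi γ 4 t * hconst 4 t - phi γ 5 t * hconst 5 t
end

section
/- A planar curve with nonvanishing curvature has constant affine curvature if and only if it is (an arc of) a conic. -/
open Filter Topology

private lemma hasDerivAt_fst' {f : ℝ → ℝ × ℝ} {d : ℝ × ℝ} {s : ℝ}
    (h : HasDerivAt f d s) : HasDerivAt (fun t => (f t).1) d.1 s := by
  exact (hasFDerivAt_fst (𝕜 := ℝ) (p := f s)).comp_hasDerivAt s h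

private lemma hasDerivAt_snd' {f : ℝ → ℝ × ℝ} {d : ℝ × ℝ} {s : ℝ}
    (h : HasDerivAt f d s) : HasDerivAt (fun t => (f t).2) d.2 s := by
  exact (hasFDerivAt_snd (𝕜 := ℝ) (p := f s)).comp_hasDerivAt s h

private lemma const_of {E : Type*} [NormedAddCommGroup E] [NormedSpace ℝ E]
    {g : ℝ → E} (h : ∀ s, HasDerivAt g 0 s) : ∀ s, g s = g 0 := fun s =>
  is_const_of_deriv_eq_zero (fun t => (h t).differentiableAt)
    (fun t => (h t).deriv) s 0

private lemma derivzero {g g' : ℝ → ℝ} (h : ∀ s, HasDerivAt g (g' s) s)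
    (h0 : ∀ s, g s = 0) : ∀ s, g' s = 0 := by
  intro s
  have hg : g = fun _ => 0 := funext h0
  rw [hg] at h
  exact (h s).unique (hasDerivAt_const s 0)

private lemma central_invariant {k₀ : ℝ} {x y x' y' : ℝ → ℝ}
    (hx : ∀ s, HasDerivAt x (x' s) s) (hx' : ∀ s, HasDerivAt x' (-(k₀ * x s)) s)
    (hy : ∀ s, HasDerivAt y (y' s) s) (hy' : ∀ s, HasDerivAt y' (-(k₀ * y s)) s) :
    ∀ s : ℝ,
      x s ^ 2 * (y' 0 * y' 0 + k₀ * (y 0 * y 0))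
        + y s ^ 2 * (x' 0 * x' 0 + k₀ * (x 0 * x 0))
        - 2 * x s * y s * (x' 0 * y' 0 + k₀ * (x 0 * y 0))
        = (x 0 * y' 0 - x' 0 * y 0) ^ 2 := by
  have E1 : ∀ s, x' s * x' s + k₀ * (x s * x s) = x' 0 * x' 0 + k₀ * (x 0 * x 0) := by
    apply const_of
    intro s
    have h := ((hx' s).mul (hx' s)).add (((hx s).mul (hx s)).const_mul k₀)
    refine h.congr_deriv (Eq.symm ?_); ring
  have E2 : ∀ s, y' s * y' s + k₀ * (y s * y s) = y' 0 * y' 0 + k₀ * (y 0 * y 0) := by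
    apply const_of
    intro s
    have h := ((hy' s).mul (hy' s)).add (((hy s).mul (hy s)).const_mul k₀)
    refine h.congr_deriv (Eq.symm ?_); ring
  have E3 : ∀ s, x' s * y' s + k₀ * (x s * y s) = x' 0 * y' 0 + k₀ * (x 0 * y 0) := by
    apply const_of
    intro s
    have h := ((hx' s).mul (hy' s)).add (((hx s).mul (hy s)).const_mul k₀)
    refine h.congr_deriv (Eq.symm ?_); ring
  have E4 : ∀ s, x s * y' s - x' s * y s = x 0 * y' 0 - x' 0 * y 0 := by
    apply const_of
    intro s
    have h := ((hx s).mul (hy' s)).sub ((hx' s).mul (hy s))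
    refine h.congr_deriv (Eq.symm ?_); ring
  intro s
  linear_combination (-(y s) ^ 2) * E1 s + (-(x s) ^ 2) * E2 s + (2 * x s * y s) * E3 s
    + (x s * y' s - x' s * y s + (x 0 * y' 0 - x' 0 * y 0)) * E4 s

/-- A planar curve with nonvanishing curvature, parametrized by affine arclength
(`det(γ', γ'') = 1`), with affine curvature `k` (so that `γ''' = -k γ'`), has constant
affine curvature if and only if it is (an arc of) a conic. -/
theorem constant_affine_curvature_iff_conic
    (γ : ℝ → ℝ × ℝ) (k : ℝ → ℝ) (hγ : ContDiff ℝ 4 γ)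
    (harc : ∀ s : ℝ,
      (deriv γ s).1 * (iteratedDeriv 2 γ s).2
        - (deriv γ s).2 * (iteratedDeriv 2 γ s).1 = 1)
    (hk : ∀ s : ℝ, iteratedDeriv 3 γ s = -(k s) • deriv γ s) :
    (∃ k₀ : ℝ, ∀ s : ℝ, k s = k₀) ↔
      ∃ a b c d e f : ℝ, (a, b, c, d, e, f) ≠ 0 ∧
        ∀ s : ℝ, conicEval a b c d e f (γ s) = 0 := by
  have e2 : iteratedDeriv 2 γ = deriv (deriv γ) := by
    rw [iteratedDeriv_succ, iteratedDeriv_one]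
  have e3 : iteratedDeriv 3 γ = deriv (deriv (deriv γ)) := by
    rw [iteratedDeriv_succ, iteratedDeriv_succ, iteratedDeriv_one]
  rw [e2] at harc
  rw [e3] at hk
  have h4 : ContDiff ℝ (3 + 1) γ := by
    rw [show ((3:WithTop ℕ∞) + 1) = 4 by norm_num]; exact hγ
  obtain ⟨hd0, -, hcd1⟩ := contDiff_succ_iff_deriv.mp h4
  have h3 : ContDiff ℝ (2 + 1) (deriv γ) := by
    rw [show ((2:WithTop ℕ∞) + 1) = 3 by norm_num]; exact hcd1
  obtain ⟨hd1, -, hcd2⟩ := contDiff_succ_iff_deriv.mp h3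
  have h2 : ContDiff ℝ (1 + 1) (deriv (deriv γ)) := by
    rw [show ((1:WithTop ℕ∞) + 1) = 2 by norm_num]; exact hcd2
  obtain ⟨hd2, -, -⟩ := contDiff_succ_iff_deriv.mp h2
  have hD1 : ∀ s, HasDerivAt γ (deriv γ s) s := fun s => (hd0 s).hasDerivAt
  have hD2 : ∀ s, HasDerivAt (deriv γ) (deriv (deriv γ) s) s := fun s => (hd1 s).hasDerivAt
  have hD3 : ∀ s, HasDerivAt (deriv (deriv γ)) (deriv (deriv (deriv γ)) s) s :=
    fun s => (hd2 s).hasDerivAt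
  constructor
  · -- constant affine curvature implies conic
    rintro ⟨k₀, hkc⟩
    by_cases h0 : k₀ = 0
    · -- parabola case
      have hk3z : ∀ s, deriv (deriv (deriv γ)) s = 0 := by
        intro s; rw [hk s, hkc s, h0]; simp
      have hA : ∀ s, deriv (deriv γ) s = deriv (deriv γ) 0 :=
        const_of (fun s => hk3z s ▸ hD3 s)
      have hB : ∀ s, deriv γ s = deriv γ 0 + s • deriv (deriv γ) 0 := by
        have h := const_of (g := fun s => deriv γ s - s • deriv (deriv γ) 0) (fun s => by
          have h2 := (hD2 s).sub ((hasDerivAt_id s).smul_const (deriv (deriv γ) 0))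
          exact h2.congr_deriv (by simp [hA s]))
        intro s
        have hs := h s
        simp only [zero_smul, sub_zero] at hs
        exact sub_eq_iff_eq_add.mp hs
      have hC : ∀ s, γ s = γ 0 + s • deriv γ 0 + (s ^ 2 / 2) • deriv (deriv γ) 0 := by
        have h := const_of (g := fun s => γ s - s • deriv γ 0
            - (s ^ 2 / 2) • deriv (deriv γ) 0) (fun s => by
          have h2 := ((hD1 s).sub ((hasDerivAt_id s).smul_const (deriv γ 0))).sub
            (((hasDerivAt_pow 2 s).div_const 2).smul_const (deriv (deriv γ) 0))
          refine h2.congr_deriv (Eq.symm ?_)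
          rw [hB s]
          have : ((2 : ℕ) : ℝ) * s ^ (2 - 1) / 2 = s := by push_cast; ring
          rw [this]
          module)
        intro s
        have hs := h s
        simp only [zero_smul, sub_zero, ne_eq, OfNat.ofNat_ne_zero, not_false_eq_true,
          zero_pow, zero_div] at hs
        have : γ s = (γ s - s • deriv γ 0 - (s ^ 2 / 2) • deriv (deriv γ) 0)
            + s • deriv γ 0 + (s ^ 2 / 2) • deriv (deriv γ) 0 := by abel
        rw [this, hs]
      have hgx : ∀ s, (γ s).1 = (γ 0).1 + s * (deriv γ 0).1
          + s ^ 2 / 2 * (deriv (deriv γ) 0).1 := by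
        intro s; rw [hC s]; simp [smul_eq_mul]
      have hgy : ∀ s, (γ s).2 = (γ 0).2 + s * (deriv γ 0).2
          + s ^ 2 / 2 * (deriv (deriv γ) 0).2 := by
        intro s; rw [hC s]; simp [smul_eq_mul]
      have hdet : (deriv γ 0).1 * (deriv (deriv γ) 0).2
          - (deriv γ 0).2 * (deriv (deriv γ) 0).1 = 1 := harc 0
      refine ⟨(deriv (deriv γ) 0).2 ^ 2,
        -2 * (deriv (deriv γ) 0).1 * (deriv (deriv γ) 0).2,
        (deriv (deriv γ) 0).1 ^ 2,
        2 * (deriv (deriv γ) 0).2 * ((γ 0).2 * (deriv (deriv γ) 0).1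
          - (γ 0).1 * (deriv (deriv γ) 0).2) + 2 * (deriv γ 0).2,
        -2 * (deriv (deriv γ) 0).1 * ((γ 0).2 * (deriv (deriv γ) 0).1
          - (γ 0).1 * (deriv (deriv γ) 0).2) - 2 * (deriv γ 0).1,
        ((γ 0).2 * (deriv (deriv γ) 0).1 - (γ 0).1 * (deriv (deriv γ) 0).2) ^ 2
          + 2 * (deriv γ 0).1 * (γ 0).2 - 2 * (deriv γ 0).2 * (γ 0).1, ?_, ?_⟩
      · intro h
        simp only [Prod.ext_iff, Prod.fst_zero, Prod.snd_zero] at h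
        obtain ⟨ha, -, hc, -⟩ := h
        have h1 : (deriv (deriv γ) 0).2 = 0 := (pow_eq_zero_iff two_ne_zero).mp ha
        have h2 : (deriv (deriv γ) 0).1 = 0 := (pow_eq_zero_iff two_ne_zero).mp hc
        rw [h1, h2] at hdet
        simp at hdet
      · intro s
        simp only [conicEval]
        rw [hgx s, hgy s]
        linear_combination (s ^ 2 * ((deriv γ 0).1 * (deriv (deriv γ) 0).2
          - (deriv γ 0).2 * (deriv (deriv γ) 0).1)) * hdet
    · -- central conic case
      have hk3c : ∀ s, deriv (deriv (deriv γ)) s = -k₀ • deriv γ s := by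
        intro s; rw [hk s, hkc s]
      obtain ⟨O1, hO1d⟩ : ∃ x : ℝ, x = k₀⁻¹ * ((deriv (deriv γ) 0).1 + k₀ * (γ 0).1) :=
        ⟨_, rfl⟩
      obtain ⟨O2, hO2d⟩ : ∃ x : ℝ, x = k₀⁻¹ * ((deriv (deriv γ) 0).2 + k₀ * (γ 0).2) :=
        ⟨_, rfl⟩
      have hw : ∀ s, deriv (deriv γ) s + k₀ • γ s = deriv (deriv γ) 0 + k₀ • γ 0 := by
        apply const_of
        intro s
        have h := (hD3 s).add ((hD1 s).const_smul k₀)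
        rw [hk3c s] at h
        exact h.congr_deriv (by simp)
      have hw1 : ∀ s, (deriv (deriv γ) s).1 + k₀ * (γ s).1
          = (deriv (deriv γ) 0).1 + k₀ * (γ 0).1 := by
        intro s
        have := congrArg Prod.fst (hw s)
        simpa [smul_eq_mul] using this
      have hw2 : ∀ s, (deriv (deriv γ) s).2 + k₀ * (γ s).2
          = (deriv (deriv γ) 0).2 + k₀ * (γ 0).2 := by
        intro s
        have := congrArg Prod.snd (hw s)
        simpa [smul_eq_mul] using this
      have hkO1 : k₀ * O1 = (deriv (deriv γ) 0).1 + k₀ * (γ 0).1 := by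
        rw [hO1d]; field_simp
      have hkO2 : k₀ * O2 = (deriv (deriv γ) 0).2 + k₀ * (γ 0).2 := by
        rw [hO2d]; field_simp
      have hO1' : ∀ s, (deriv (deriv γ) s).1 = -k₀ * ((γ s).1 - O1) := by
        intro s; linear_combination hw1 s - hkO1
      have hO2' : ∀ s, (deriv (deriv γ) s).2 = -k₀ * ((γ s).2 - O2) := by
        intro s; linear_combination hw2 s - hkO2
      have hx : ∀ s, HasDerivAt
          (fun t => k₀ * (((γ t).1 - O1) * (deriv γ 0).2
            - ((γ t).2 - O2) * (deriv γ 0).1))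
          (k₀ * ((deriv γ s).1 * (deriv γ 0).2 - (deriv γ s).2 * (deriv γ 0).1)) s :=
        fun s => ((((hasDerivAt_fst' (hD1 s)).sub_const O1).mul_const (deriv γ 0).2).sub
          (((hasDerivAt_snd' (hD1 s)).sub_const O2).mul_const (deriv γ 0).1)).const_mul k₀
      have hx' : ∀ s, HasDerivAt
          (fun t => k₀ * ((deriv γ t).1 * (deriv γ 0).2 - (deriv γ t).2 * (deriv γ 0).1))
          (-(k₀ * (k₀ * (((γ s).1 - O1) * (deriv γ 0).2
            - ((γ s).2 - O2) * (deriv γ 0).1)))) s := by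
        intro s
        have h := (((hasDerivAt_fst' (hD2 s)).mul_const (deriv γ 0).2).sub
          ((hasDerivAt_snd' (hD2 s)).mul_const (deriv γ 0).1)).const_mul k₀
        refine h.congr_deriv (Eq.symm ?_)
        rw [hO1' s, hO2' s]
        ring
      have hy : ∀ s, HasDerivAt
          (fun t => k₀ * (((γ 0).1 - O1) * ((γ t).2 - O2)
            - ((γ 0).2 - O2) * ((γ t).1 - O1)))
          (k₀ * (((γ 0).1 - O1) * (deriv γ s).2 - ((γ 0).2 - O2) * (deriv γ s).1)) s :=
        fun s => ((((hasDerivAt_snd' (hD1 s)).sub_const O2).const_mul ((γ 0).1 - O1)).sub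
          (((hasDerivAt_fst' (hD1 s)).sub_const O1).const_mul
            ((γ 0).2 - O2))).const_mul k₀
      have hy' : ∀ s, HasDerivAt
          (fun t => k₀ * (((γ 0).1 - O1) * (deriv γ t).2
            - ((γ 0).2 - O2) * (deriv γ t).1))
          (-(k₀ * (k₀ * (((γ 0).1 - O1) * ((γ s).2 - O2)
            - ((γ 0).2 - O2) * ((γ s).1 - O1))))) s := by
        intro s
        have h := (((hasDerivAt_snd' (hD2 s)).const_mul ((γ 0).1 - O1)).sub
          ((hasDerivAt_fst' (hD2 s)).const_mul ((γ 0).2 - O2))).const_mul k₀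
        refine h.congr_deriv (Eq.symm ?_)
        rw [hO1' s, hO2' s]
        ring
      have hcent := central_invariant hx hx' hy hy'
      beta_reduce at hcent
      have hdet : k₀ * (((γ 0).1 - O1) * (deriv γ 0).2
          - ((γ 0).2 - O2) * (deriv γ 0).1) = 1 := by
        have h := harc 0
        rw [hO1' 0, hO2' 0] at h
        linear_combination h
      refine ⟨(k₀ * (deriv γ 0).2) ^ 2 + k₀ * (k₀ * ((γ 0).2 - O2)) ^ 2,
        2 * (k₀ * (deriv γ 0).2) * (-(k₀ * (deriv γ 0).1))
          + k₀ * (2 * (k₀ * ((γ 0).2 - O2)) * (-(k₀ * ((γ 0).1 - O1)))),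
        (-(k₀ * (deriv γ 0).1)) ^ 2 + k₀ * (-(k₀ * ((γ 0).1 - O1))) ^ 2,
        2 * (k₀ * (deriv γ 0).2) * (k₀ * (O2 * (deriv γ 0).1 - O1 * (deriv γ 0).2))
          + k₀ * (2 * (-(k₀ * ((γ 0).2 - O2)))
            * (k₀ * (O1 * ((γ 0).2 - O2) - O2 * ((γ 0).1 - O1)))),
        2 * (-(k₀ * (deriv γ 0).1)) * (k₀ * (O2 * (deriv γ 0).1 - O1 * (deriv γ 0).2))
          + k₀ * (2 * (k₀ * ((γ 0).1 - O1))
            * (k₀ * (O1 * ((γ 0).2 - O2) - O2 * ((γ 0).1 - O1)))),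
        (k₀ * (O2 * (deriv γ 0).1 - O1 * (deriv γ 0).2)) ^ 2
          + k₀ * (k₀ * (O1 * ((γ 0).2 - O2) - O2 * ((γ 0).1 - O1))) ^ 2 - 1, ?_, ?_⟩
      · intro h
        simp only [Prod.ext_iff, Prod.fst_zero, Prod.snd_zero] at h
        obtain ⟨ha, hb, hc, hd, he, hf⟩ := h
        have : (-1 : ℝ) = 0 := by
          linear_combination O1 ^ 2 * ha + O1 * O2 * hb + O2 ^ 2 * hc + O1 * hd
            + O2 * he + hf
        norm_num at this
      · intro s
        simp only [conicEval]
        have hc := hcent s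
        linear_combination hc
          + ((k₀ * (((γ 0).1 - O1) * (deriv γ 0).2
                - ((γ 0).2 - O2) * (deriv γ 0).1)) ^ 2 + 1
              - ((k₀ * (((γ s).1 - O1) * (deriv γ 0).2
                  - ((γ s).2 - O2) * (deriv γ 0).1)) ^ 2
                + k₀ * (k₀ * (((γ 0).1 - O1) * ((γ s).2 - O2)
                  - ((γ 0).2 - O2) * ((γ s).1 - O1))) ^ 2))
            * (k₀ * (((γ 0).1 - O1) * (deriv γ 0).2
                - ((γ 0).2 - O2) * (deriv γ 0).1) + 1)
            * hdet
  · -- conic implies constant affine curvature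
    rintro ⟨a, b, c, d, e, f, hne, hF⟩
    have hkx : ∀ s, (deriv (deriv (deriv γ)) s).1 = -(k s) * (deriv γ s).1 := by
      intro s; rw [hk s]; simp [Prod.smul_fst]
    have hky : ∀ s, (deriv (deriv (deriv γ)) s).2 = -(k s) * (deriv γ s).2 := by
      intro s; rw [hk s]; simp [Prod.smul_snd]
    have hX : ∀ s, HasDerivAt (fun t => (γ t).1) ((deriv γ s).1) s :=
      fun s => hasDerivAt_fst' (hD1 s)
    have hY : ∀ s, HasDerivAt (fun t => (γ t).2) ((deriv γ s).2) s :=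
      fun s => hasDerivAt_snd' (hD1 s)
    have hX1 : ∀ s, HasDerivAt (fun t => (deriv γ t).1) ((deriv (deriv γ) s).1) s :=
      fun s => hasDerivAt_fst' (hD2 s)
    have hY1 : ∀ s, HasDerivAt (fun t => (deriv γ t).2) ((deriv (deriv γ) s).2) s :=
      fun s => hasDerivAt_snd' (hD2 s)
    have hX2 : ∀ s, HasDerivAt (fun t => (deriv (deriv γ) t).1)
        ((deriv (deriv (deriv γ)) s).1) s := fun s => hasDerivAt_fst' (hD3 s)
    have hY2 : ∀ s, HasDerivAt (fun t => (deriv (deriv γ) t).2)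
        ((deriv (deriv (deriv γ)) s).2) s := fun s => hasDerivAt_snd' (hD3 s)
    have I1 : ∀ s, (2 * a * (γ s).1 + b * (γ s).2 + d) * (deriv γ s).1
        + (b * (γ s).1 + 2 * c * (γ s).2 + e) * (deriv γ s).2 = 0 := by
      apply derivzero (g := fun t => a * (γ t).1 ^ 2 + b * (γ t).1 * (γ t).2
        + c * (γ t).2 ^ 2 + d * (γ t).1 + e * (γ t).2 + f)
      · intro s
        have h := ((((((hX s).pow 2).const_mul a).add
            (((hX s).const_mul b).mul (hY s))).add
            (((hY s).pow 2).const_mul c)).add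
            ((hX s).const_mul d)).add ((hY s).const_mul e) |>.add_const f
        refine h.congr_deriv (Eq.symm ?_)
        push_cast
        ring
      · intro t; exact hF t
    have I2 : ∀ s, 2 * a * (deriv γ s).1 ^ 2 + 2 * b * ((deriv γ s).1 * (deriv γ s).2)
        + 2 * c * (deriv γ s).2 ^ 2
        + (2 * a * (γ s).1 + b * (γ s).2 + d) * (deriv (deriv γ) s).1
        + (b * (γ s).1 + 2 * c * (γ s).2 + e) * (deriv (deriv γ) s).2 = 0 := by
      apply derivzero (g := fun t => (2 * a * (γ t).1 + b * (γ t).2 + d) * (deriv γ t).1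
        + (b * (γ t).1 + 2 * c * (γ t).2 + e) * (deriv γ t).2)
      · intro s
        have h := (((((hX s).const_mul (2 * a)).add ((hY s).const_mul b)).add_const d).mul
            (hX1 s)).add
          (((((hX s).const_mul b).add ((hY s).const_mul (2 * c))).add_const e).mul (hY1 s))
        refine h.congr_deriv (Eq.symm ?_)
        simp only [Pi.add_apply]
        ring
      · exact I1
    have I3 : ∀ s, 3 * (2 * a * ((deriv γ s).1 * (deriv (deriv γ) s).1)
          + b * ((deriv γ s).1 * (deriv (deriv γ) s).2
            + (deriv (deriv γ) s).1 * (deriv γ s).2)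
          + 2 * c * ((deriv γ s).2 * (deriv (deriv γ) s).2))
        - k s * ((2 * a * (γ s).1 + b * (γ s).2 + d) * (deriv γ s).1
          + (b * (γ s).1 + 2 * c * (γ s).2 + e) * (deriv γ s).2) = 0 := by
      apply derivzero (g := fun t => 2 * a * (deriv γ t).1 ^ 2
        + 2 * b * ((deriv γ t).1 * (deriv γ t).2) + 2 * c * (deriv γ t).2 ^ 2
        + (2 * a * (γ t).1 + b * (γ t).2 + d) * (deriv (deriv γ) t).1
        + (b * (γ t).1 + 2 * c * (γ t).2 + e) * (deriv (deriv γ) t).2)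
      · intro s
        have h := (((((hX1 s).pow 2).const_mul (2 * a)).add
            (((hX1 s).mul (hY1 s)).const_mul (2 * b))).add
            (((hY1 s).pow 2).const_mul (2 * c))).add
            ((((((hX s).const_mul (2 * a)).add ((hY s).const_mul b)).add_const d).mul
              (hX2 s))) |>.add
            ((((((hX s).const_mul b).add ((hY s).const_mul (2 * c))).add_const e).mul
              (hY2 s)))
        refine h.congr_deriv (Eq.symm ?_)
        simp only [Pi.add_apply]
        rw [hkx s, hky s]
        push_cast
        ring
      · exact I2
    have hJ : ∀ s, 2 * a * ((deriv γ s).1 * (deriv (deriv γ) s).1)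
        + b * ((deriv γ s).1 * (deriv (deriv γ) s).2
          + (deriv (deriv γ) s).1 * (deriv γ s).2)
        + 2 * c * ((deriv γ s).2 * (deriv (deriv γ) s).2) = 0 := by
      intro s
      linear_combination (1 / 3) * I3 s + (k s / 3) * I1 s
    have I4 : ∀ s, (2 * a * (deriv (deriv γ) s).1 ^ 2
          + 2 * b * ((deriv (deriv γ) s).1 * (deriv (deriv γ) s).2)
          + 2 * c * (deriv (deriv γ) s).2 ^ 2)
        - k s * (2 * a * ((deriv γ s).1 * (deriv γ s).1)
          + 2 * b * ((deriv γ s).1 * (deriv γ s).2)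
          + 2 * c * ((deriv γ s).2 * (deriv γ s).2)) = 0 := by
      apply derivzero (g := fun t => 2 * a * ((deriv γ t).1 * (deriv (deriv γ) t).1)
        + b * ((deriv γ t).1 * (deriv (deriv γ) t).2
          + (deriv (deriv γ) t).1 * (deriv γ t).2)
        + 2 * c * ((deriv γ t).2 * (deriv (deriv γ) t).2))
      · intro s
        have h := ((((hX1 s).mul (hX2 s)).const_mul (2 * a)).add
            ((((hX1 s).mul (hY2 s)).add ((hX2 s).mul (hY1 s))).const_mul b)).add
            (((hY1 s).mul (hY2 s)).const_mul (2 * c))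
        refine h.congr_deriv (Eq.symm ?_)
        rw [hkx s, hky s]
        ring
      · exact hJ
    have hαc : ∀ s, 2 * a * ((deriv γ s).1 * (deriv γ s).1)
        + 2 * b * ((deriv γ s).1 * (deriv γ s).2)
        + 2 * c * ((deriv γ s).2 * (deriv γ s).2)
        = 2 * a * ((deriv γ 0).1 * (deriv γ 0).1)
        + 2 * b * ((deriv γ 0).1 * (deriv γ 0).2)
        + 2 * c * ((deriv γ 0).2 * (deriv γ 0).2) := by
      apply const_of (g := fun t => 2 * a * ((deriv γ t).1 * (deriv γ t).1)
        + 2 * b * ((deriv γ t).1 * (deriv γ t).2)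
        + 2 * c * ((deriv γ t).2 * (deriv γ t).2))
      intro s
      have h := ((((hX1 s).mul (hX1 s)).const_mul (2 * a)).add
          (((hX1 s).mul (hY1 s)).const_mul (2 * b))).add
          (((hY1 s).mul (hY1 s)).const_mul (2 * c))
      refine h.congr_deriv (Eq.symm ?_)
      linear_combination (-2 : ℝ) * hJ s
    have hkval : ∀ s, k s * (2 * a * ((deriv γ 0).1 * (deriv γ 0).1)
        + 2 * b * ((deriv γ 0).1 * (deriv γ 0).2)
        + 2 * c * ((deriv γ 0).2 * (deriv γ 0).2)) ^ 2 = 4 * a * c - b ^ 2 := by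
      intro s
      linear_combination
        (-(k s) * ((2 * a * ((deriv γ s).1 * (deriv γ s).1)
          + 2 * b * ((deriv γ s).1 * (deriv γ s).2)
          + 2 * c * ((deriv γ s).2 * (deriv γ s).2))
          + (2 * a * ((deriv γ 0).1 * (deriv γ 0).1)
          + 2 * b * ((deriv γ 0).1 * (deriv γ 0).2)
          + 2 * c * ((deriv γ 0).2 * (deriv γ 0).2)))) * hαc s
        + (2 * a * ((deriv γ s).1 * (deriv (deriv γ) s).1)
          + b * ((deriv γ s).1 * (deriv (deriv γ) s).2
            + (deriv (deriv γ) s).1 * (deriv γ s).2)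
          + 2 * c * ((deriv γ s).2 * (deriv (deriv γ) s).2)) * hJ s
        + ((4 * a * c - b ^ 2) * ((deriv γ s).1 * (deriv (deriv γ) s).2
            - (deriv γ s).2 * (deriv (deriv γ) s).1 + 1)) * harc s
        - (2 * a * ((deriv γ s).1 * (deriv γ s).1)
          + 2 * b * ((deriv γ s).1 * (deriv γ s).2)
          + 2 * c * ((deriv γ s).2 * (deriv γ s).2)) * I4 s
    by_cases hα0 : 2 * a * ((deriv γ 0).1 * (deriv γ 0).1)
        + 2 * b * ((deriv γ 0).1 * (deriv γ 0).2)
        + 2 * c * ((deriv γ 0).2 * (deriv γ 0).2) = 0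
    · exfalso
      have hα : ∀ s, 2 * a * ((deriv γ s).1 * (deriv γ s).1)
          + 2 * b * ((deriv γ s).1 * (deriv γ s).2)
          + 2 * c * ((deriv γ s).2 * (deriv γ s).2) = 0 := by
        intro s; rw [hαc s]; exact hα0
      have hL2 : ∀ s, (2 * a * (γ s).1 + b * (γ s).2 + d) * (deriv (deriv γ) s).1
          + (b * (γ s).1 + 2 * c * (γ s).2 + e) * (deriv (deriv γ) s).2 = 0 := by
        intro s; linear_combination I2 s - hα s
      have hL1f : ∀ s, 2 * a * (γ s).1 + b * (γ s).2 + d = 0 := by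
        intro s
        linear_combination (deriv (deriv γ) s).2 * I1 s - (deriv γ s).2 * hL2 s
          - (2 * a * (γ s).1 + b * (γ s).2 + d) * harc s
      have hL2f : ∀ s, b * (γ s).1 + 2 * c * (γ s).2 + e = 0 := by
        intro s
        linear_combination (deriv γ s).1 * hL2 s - (deriv (deriv γ) s).1 * I1 s
          - (b * (γ s).1 + 2 * c * (γ s).2 + e) * harc s
      have hM1 : ∀ s, 2 * a * (deriv γ s).1 + b * (deriv γ s).2 = 0 := by
        apply derivzero (g := fun t => 2 * a * (γ t).1 + b * (γ t).2 + d)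
        · intro s
          exact (((hX s).const_mul (2 * a)).add ((hY s).const_mul b)).add_const d
        · exact hL1f
      have hM2 : ∀ s, 2 * a * (deriv (deriv γ) s).1 + b * (deriv (deriv γ) s).2 = 0 := by
        apply derivzero (g := fun t => 2 * a * (deriv γ t).1 + b * (deriv γ t).2)
        · intro s
          exact ((hX1 s).const_mul (2 * a)).add ((hY1 s).const_mul b)
        · exact hM1
      have hN1 : ∀ s, b * (deriv γ s).1 + 2 * c * (deriv γ s).2 = 0 := by
        apply derivzero (g := fun t => b * (γ t).1 + 2 * c * (γ t).2 + e)
        · intro s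
          exact (((hX s).const_mul b).add ((hY s).const_mul (2 * c))).add_const e
        · exact hL2f
      have hN2 : ∀ s, b * (deriv (deriv γ) s).1 + 2 * c * (deriv (deriv γ) s).2 = 0 := by
        apply derivzero (g := fun t => b * (deriv γ t).1 + 2 * c * (deriv γ t).2)
        · intro s
          exact ((hX1 s).const_mul b).add ((hY1 s).const_mul (2 * c))
        · exact hN1
      have ha : a = 0 := by
        linear_combination ((deriv (deriv γ) 0).2 / 2) * hM1 0
          - ((deriv γ 0).2 / 2) * hM2 0 - a * harc 0
      have hb : b = 0 := by
        linear_combination (deriv γ 0).1 * hM2 0 - (deriv (deriv γ) 0).1 * hM1 0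
          - b * harc 0
      have hcc : c = 0 := by
        linear_combination ((deriv γ 0).1 / 2) * hN2 0
          - ((deriv (deriv γ) 0).1 / 2) * hN1 0 - c * harc 0
      have hdd : d = 0 := by
        linear_combination hL1f 0 - 2 * (γ 0).1 * ha - (γ 0).2 * hb
      have hee : e = 0 := by
        linear_combination hL2f 0 - (γ 0).1 * hb - 2 * (γ 0).2 * hcc
      have hff : f = 0 := by
        have h0 := hF 0
        simp only [conicEval] at h0
        linear_combination h0 - (γ 0).1 ^ 2 * ha - (γ 0).1 * (γ 0).2 * hb
          - (γ 0).2 ^ 2 * hcc - (γ 0).1 * hdd - (γ 0).2 * hee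
      exact hne (by rw [ha, hb, hcc, hdd, hee, hff]; rfl)
    · refine ⟨(4 * a * c - b ^ 2) / (2 * a * ((deriv γ 0).1 * (deriv γ 0).1)
        + 2 * b * ((deriv γ 0).1 * (deriv γ 0).2)
        + 2 * c * ((deriv γ 0).2 * (deriv γ 0).2)) ^ 2, fun s => ?_⟩
      rw [eq_div_iff (by positivity)]
      exact hkval s
end

section
/- Let f : ℝⁿ⁻¹ → ℝ (coordinates (x₁, x̂), x̂ = (x₂,…,x_{n-1})) be a C⁶ function of the form f(x₁,x̂) = x₁² + x₁ Σ_{j≥2} c_j x_j + ⟨A x̂, x̂⟩ + (terms of order ≥ 3 with no x₁³ term), and let s_j be the Taylor coefficient of f at x₁² x_j. Then among all quadrics Γ = {x_n = (x₁² + x₁ Σ c_j x_j + ⟨A x̂, x̂⟩)/(1 + Σ d_j x_j)} tangent to the graph of f at the origin to second order and containing the parabola {x_n = x₁², x̂ = 0}, there is a unique choice of (d_2,…,d_{n-1}), namely d_j = -s_j, for which the unit normal fields of the graph of f and of Γ, restricted to the x₁-axis sections, agree to second order in x₁. -/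
open Filter Topology Asymptotics Matrix

/-- The gradient, along the `x₁`-axis, of a function `h : ℝ × ℝ^m → ℝ` whose graph
`{xₙ = h(x₁, x̂)}` is a hypersurface: the pair of the `x₁`-partial derivative and the
`x̂`-partial derivatives at `(x₁, 0)`. -/
noncomputable def gradAxis {m : ℕ} (h : ℝ × (Fin m → ℝ) → ℝ) (x₁ : ℝ) :
    ℝ × (Fin m → ℝ) :=
  (deriv (fun t => h (t, 0)) x₁, fun j => deriv (fun τ => h (x₁, Pi.single j τ)) 0)

/-- The (downward) unit normal `(∇h, -1)/√(1+|∇h|²)` to the graph `{xₙ = h}` along the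
`x₁`-axis. -/
noncomputable def normalAxis {m : ℕ} (h : ℝ × (Fin m → ℝ) → ℝ) (x₁ : ℝ) :
    (ℝ × (Fin m → ℝ)) × ℝ :=
  (Real.sqrt (1 + (gradAxis h x₁).1 ^ 2 + ∑ j, ((gradAxis h x₁).2 j) ^ 2))⁻¹ •
    ((gradAxis h x₁, -1) : (ℝ × (Fin m → ℝ)) × ℝ)

section Helpers
open Set

lemma mvt_step {g : ℝ → ℝ} (hd : ∀ᶠ t in 𝓝 (0:ℝ), DifferentiableAt ℝ g t)
    (hg0 : g 0 = 0) {k : ℕ} {c : ℝ} (hc : 0 ≤ c)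
    (hb : ∀ᶠ t in 𝓝 (0:ℝ), |deriv g t| ≤ c * |t| ^ k) :
    ∀ᶠ t in 𝓝 (0:ℝ), |g t| ≤ c * |t| ^ (k + 1) := by
  obtain ⟨δ, hδ, hball⟩ := Metric.mem_nhds_iff.1 (hd.and hb)
  have : Metric.ball (0:ℝ) δ ∈ 𝓝 (0:ℝ) := Metric.ball_mem_nhds _ hδ
  filter_upwards [this] with t ht
  have hsub : Metric.closedBall (0:ℝ) |t| ⊆ Metric.ball (0:ℝ) δ := by
    intro τ hτ
    simp only [Metric.mem_closedBall, Real.dist_eq, sub_zero] at hτ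
    simp only [Metric.mem_ball, Real.dist_eq, sub_zero] at ht ⊢
    exact lt_of_le_of_lt hτ ht
  have key := Convex.norm_image_sub_le_of_norm_hasDerivWithin_le
    (f := g) (f' := deriv g) (C := c * |t| ^ k) (s := Metric.closedBall (0:ℝ) |t|) (x := 0) (y := t)
    (fun τ hτ => ((hball (hsub hτ)).1.hasDerivAt).hasDerivWithinAt)
    (fun τ hτ => by
      have h1 := (hball (hsub hτ)).2
      have h2 : |τ| ≤ |t| := by
        simpa [Real.dist_eq] using hτ
      calc ‖deriv g τ‖ ≤ c * |τ| ^ k := h1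
        _ ≤ c * |t| ^ k := by
          apply mul_le_mul_of_nonneg_left (pow_le_pow_left₀ (abs_nonneg _) h2 k) hc)
    (convex_closedBall _ _)
    (Metric.mem_closedBall_self (abs_nonneg t))
    (by simp [Real.dist_eq])
  rw [hg0, sub_zero] at key
  calc |g t| ≤ c * |t| ^ k * ‖t - 0‖ := key
    _ = c * |t| ^ (k+1) := by rw [sub_zero, pow_succ]; ring_nf; simp [Real.norm_eq_abs]; ring

lemma bigO_step {g : ℝ → ℝ} (hd : ∀ᶠ t in 𝓝 (0:ℝ), DifferentiableAt ℝ g t)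
    (hg0 : g 0 = 0) {k : ℕ}
    (hb : deriv g =O[𝓝 (0:ℝ)] fun t => |t| ^ k) :
    g =O[𝓝 (0:ℝ)] fun t => |t| ^ (k + 1) := by
  obtain ⟨c, hc, hbound⟩ := hb.exists_nonneg
  rw [IsBigOWith] at hbound
  have hb' : ∀ᶠ t in 𝓝 (0:ℝ), |deriv g t| ≤ c * |t| ^ k := by
    filter_upwards [hbound] with t ht
    simpa [Real.norm_eq_abs, abs_pow, abs_abs] using ht
  have := mvt_step hd hg0 hc hb'
  rw [isBigO_iff]
  exact ⟨c, by filter_upwards [this] with t ht; simpa [Real.norm_eq_abs, abs_pow, abs_abs] using ht⟩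

lemma littleo_step {g : ℝ → ℝ} (hd : ∀ᶠ t in 𝓝 (0:ℝ), DifferentiableAt ℝ g t)
    (hg0 : g 0 = 0) {k : ℕ}
    (hb : deriv g =o[𝓝 (0:ℝ)] fun t => |t| ^ k) :
    g =o[𝓝 (0:ℝ)] fun t => |t| ^ (k + 1) := by
  rw [isLittleO_iff] at hb ⊢
  intro ε hε
  have hb' : ∀ᶠ t in 𝓝 (0:ℝ), |deriv g t| ≤ ε * |t| ^ k := by
    filter_upwards [hb hε] with t ht
    simpa [Real.norm_eq_abs, abs_pow, abs_abs] using ht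
  filter_upwards [mvt_step hd hg0 hε.le hb'] with t ht
  simpa [Real.norm_eq_abs, abs_pow, abs_abs] using ht
open Filter Topology Asymptotics Matrix Set

lemma coeff_zero_of_isLittleO {a : ℝ} {k : ℕ}
    (h : (fun t : ℝ => a * t ^ k) =o[𝓝 (0:ℝ)] fun t => t ^ k) : a = 0 := by
  by_contra ha
  rw [isLittleO_iff] at h
  have hb := h (show (0:ℝ) < |a|/2 by positivity)
  obtain ⟨t, ht, htne⟩ := ((hb.filter_mono nhdsWithin_le_nhds).and
    (self_mem_nhdsWithin (s := {(0:ℝ)}ᶜ) (a := (0:ℝ)) : _ ∈ 𝓝[≠] (0:ℝ))).exists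
  have htk : (0:ℝ) < |t ^ k| := by
    have : t ≠ 0 := htne
    positivity
  rw [Real.norm_eq_abs, Real.norm_eq_abs, abs_mul] at ht
  nlinarith [abs_pos.2 ha]

lemma coeff_zero_of_isBigO {a : ℝ}
    (h : (fun t : ℝ => a * t ^ 2) =O[𝓝 (0:ℝ)] fun t => t ^ 3) : a = 0 :=
  coeff_zero_of_isLittleO (h.trans_isLittleO (isLittleO_pow_pow (by norm_num)))

lemma abs_pow_eq_norm_pow (k : ℕ) : (fun t : ℝ => |t| ^ k) = fun t : ℝ => ‖t ^ k‖ := by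
  funext t; simp [abs_pow]
lemma key_aux {ψ : ℝ → ℝ} (hψ : ContDiffAt ℝ 4 ψ 0) (h : ψ =O[𝓝 (0:ℝ)] fun t => t ^ 4) :
    deriv ψ =O[𝓝 (0:ℝ)] fun t => t ^ 3 := by
  obtain ⟨u, hu_nhds, hcd0⟩ := hψ.contDiffOn (le_refl _) (by simp)
  set v : Set ℝ := interior u with hv
  have hvo : IsOpen v := isOpen_interior
  have h0v : (0:ℝ) ∈ v := mem_interior_iff_mem_nhds.2 hu_nhds
  have hcd : ContDiffOn ℝ 4 ψ v := hcd0.mono interior_subset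
  have hEq : ∀ n : ℕ, Set.EqOn (iteratedDerivWithin n ψ v) (iteratedDeriv n ψ) v := by
    intro n t ht
    simp only [iteratedDerivWithin, iteratedDeriv,
      iteratedFDerivWithin_of_isOpen n hvo ht]
  have hDk : ∀ k : ℕ, k < 4 → ∀ t ∈ v, DifferentiableAt ℝ (iteratedDeriv k ψ) t := by
    intro k hk t ht
    have h1 : DifferentiableOn ℝ (iteratedDerivWithin k ψ v) v :=
      hcd.differentiableOn_iteratedDerivWithin (by exact_mod_cast hk) hvo.uniqueDiffOn
    have h2 : DifferentiableOn ℝ (iteratedDeriv k ψ) v :=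
      h1.congr fun x hx => (hEq k hx).symm
    exact h2.differentiableAt (hvo.mem_nhds ht)
  have hEv : ∀ k : ℕ, k < 4 → ∀ᶠ t in 𝓝 (0:ℝ), DifferentiableAt ℝ (iteratedDeriv k ψ) t := by
    intro k hk
    filter_upwards [hvo.mem_nhds h0v] with t ht using hDk k hk t ht
  have hCont4 : ContinuousAt (iteratedDeriv 4 ψ) 0 := by
    have h1 : ContinuousOn (iteratedDerivWithin 4 ψ v) v :=
      hcd.continuousOn_iteratedDerivWithin (le_refl _) hvo.uniqueDiffOn
    have h2 : ContinuousOn (iteratedDeriv 4 ψ) v := h1.congr fun x hx => (hEq 4 hx).symm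
    exact h2.continuousAt (hvo.mem_nhds h0v)
  -- value at 0
  have h00 : ψ 0 = 0 := by
    obtain ⟨C, hC⟩ := h.bound
    have := hC.self_of_nhds
    simp only [Real.norm_eq_abs] at this
    have h' : |ψ 0| ≤ 0 := by simpa using this
    have := abs_nonneg (ψ 0)
    have : |ψ 0| = 0 := le_antisymm h' this
    exact abs_eq_zero.1 this
  -- first derivative at 0
  have hdiff0 : DifferentiableAt ℝ ψ 0 := hψ.differentiableAt (by norm_num)
  have h1 : deriv ψ 0 = 0 := by
    have hslope : Tendsto (slope ψ 0) (𝓝[≠] (0:ℝ)) (𝓝 (deriv ψ 0)) :=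
      hasDerivAt_iff_tendsto_slope.1 hdiff0.hasDerivAt
    obtain ⟨C, hC0, hC⟩ := h.exists_nonneg
    rw [IsBigOWith] at hC
    have hb : ∀ᶠ t in 𝓝[≠] (0:ℝ), ‖slope ψ 0 t‖ ≤ C * |t| ^ 3 := by
      filter_upwards [hC.filter_mono nhdsWithin_le_nhds,
        self_mem_nhdsWithin (s := {(0:ℝ)}ᶜ)] with t ht htne
      have htne' : t ≠ 0 := htne
      rw [Real.norm_eq_abs, Real.norm_eq_abs] at ht
      rw [slope_def_field, h00, sub_zero, sub_zero, Real.norm_eq_abs, abs_div,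
        div_le_iff₀ (abs_pos.2 htne')]
      calc |ψ t| ≤ C * |t ^ 4| := ht
        _ = C * |t| ^ 3 * |t| := by rw [abs_pow]; ring
    have htend : Tendsto (fun t : ℝ => C * |t| ^ 3) (𝓝[≠] (0:ℝ)) (𝓝 0) := by
      have : Tendsto (fun t : ℝ => C * |t| ^ 3) (𝓝 (0:ℝ)) (𝓝 (C * |(0:ℝ)| ^ 3)) := by
        apply Tendsto.const_mul
        exact ((continuous_abs.tendsto 0).pow 3)
      simp only [abs_zero] at this
      norm_num at this
      exact this.mono_left nhdsWithin_le_nhds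
    have := squeeze_zero_norm' hb htend
    exact tendsto_nhds_unique hslope this
  -- second derivative at 0
  set a2 := iteratedDeriv 2 ψ 0 with ha2
  have hD1diff : DifferentiableAt ℝ (deriv ψ) 0 := by
    have := hDk 1 (by norm_num) 0 h0v
    rwa [iteratedDeriv_one] at this
  have hD1at : HasDerivAt (deriv ψ) a2 0 := by
    have := hD1diff.hasDerivAt
    have heq : deriv (deriv ψ) 0 = a2 := by
      rw [ha2, iteratedDeriv_succ, iteratedDeriv_one]
    rwa [heq] at this
  have hlo : (fun t : ℝ => deriv ψ t - a2 * t) =o[𝓝 (0:ℝ)] fun t => |t| ^ 1 := by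
    have := hasDerivAt_iff_isLittleO.1 hD1at
    simp only [h1, sub_zero, sub_zero, smul_eq_mul] at this
    rw [abs_pow_eq_norm_pow]
    rw [isLittleO_norm_right (g' := fun t : ℝ => t ^ 1)]
    refine this.congr (fun t => by ring) (fun t => by ring)
  have hψdiffEv : ∀ᶠ t in 𝓝 (0:ℝ), DifferentiableAt ℝ ψ t := by
    have := hEv 0 (by norm_num)
    simpa [iteratedDeriv_zero] using this
  have hfun2 : iteratedDeriv 2 ψ = deriv (deriv ψ) := by
    rw [show (2:ℕ) = 1 + 1 from rfl, iteratedDeriv_succ, iteratedDeriv_one]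
  have hD1Ev : ∀ᶠ t in 𝓝 (0:ℝ), DifferentiableAt ℝ (deriv ψ) t := by
    have := hEv 1 (by norm_num)
    simpa [iteratedDeriv_one] using this
  have h2 : a2 = 0 := by
    set χ : ℝ → ℝ := fun t => ψ t - a2 / 2 * t ^ 2 with hχ
    have hχd : ∀ᶠ t in 𝓝 (0:ℝ), DifferentiableAt ℝ χ t := by
      filter_upwards [hψdiffEv] with t ht
      exact ht.sub ((differentiableAt_pow 2).const_mul _)
    have hχ0 : χ 0 = 0 := by simp [hχ, h00]
    have hderivχ : ∀ᶠ t in 𝓝 (0:ℝ), deriv χ t = deriv ψ t - a2 * t := by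
      filter_upwards [hψdiffEv] with t ht
      rw [hχ]
      rw [deriv_fun_sub ht ((differentiableAt_pow 2).const_mul _)]
      rw [deriv_const_mul _ (differentiableAt_pow 2), deriv_pow_field]
      ring
    have hEEq : (fun t : ℝ => deriv ψ t - a2 * t) =ᶠ[𝓝 (0:ℝ)] deriv χ := by
      filter_upwards [hderivχ] with t ht using ht.symm
    have hlo2 : deriv χ =o[𝓝 (0:ℝ)] fun t : ℝ => |t| ^ 1 :=
      hlo.congr' hEEq EventuallyEq.rfl
    have hχo : χ =o[𝓝 (0:ℝ)] fun t : ℝ => |t| ^ 2 := littleo_step hχd hχ0 hlo2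
    have hχo' : χ =o[𝓝 (0:ℝ)] fun t : ℝ => t ^ 2 := by
      rw [abs_pow_eq_norm_pow] at hχo
      exact (isLittleO_norm_right (g' := fun t : ℝ => t ^ 2)).1 hχo
    have hψo : ψ =o[𝓝 (0:ℝ)] fun t : ℝ => t ^ 2 :=
      h.trans_isLittleO (isLittleO_pow_pow (by norm_num))
    have : (fun t : ℝ => a2 / 2 * t ^ 2) =o[𝓝 (0:ℝ)] fun t : ℝ => t ^ 2 := by
      have := hψo.sub hχo'
      refine this.congr (fun t => by simp only [hχ]; ring) (fun t => rfl)
    have := coeff_zero_of_isLittleO this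
    linarith
  have h2' : iteratedDeriv 2 ψ 0 = 0 := h2
  -- third derivative at 0
  set a3 := iteratedDeriv 3 ψ 0 with ha3
  have hD2at : HasDerivAt (iteratedDeriv 2 ψ) a3 0 := by
    have := (hDk 2 (by norm_num) 0 h0v).hasDerivAt
    have heq : deriv (iteratedDeriv 2 ψ) 0 = a3 := by
      rw [ha3]; exact (congrFun iteratedDeriv_succ 0).symm
    rwa [heq] at this
  have hlo3 : (fun t : ℝ => iteratedDeriv 2 ψ t - a3 * t) =o[𝓝 (0:ℝ)] fun t : ℝ => |t| ^ 1 := by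
    have := hasDerivAt_iff_isLittleO.1 hD2at
    simp only [h2', sub_zero, smul_eq_mul] at this
    rw [abs_pow_eq_norm_pow]
    rw [isLittleO_norm_right (g' := fun t : ℝ => t ^ 1)]
    refine this.congr (fun t => by ring) (fun t => by ring)
  have h3 : a3 = 0 := by
    set η : ℝ → ℝ := fun t => deriv ψ t - a3 / 2 * t ^ 2 with hη
    have hηd : ∀ᶠ t in 𝓝 (0:ℝ), DifferentiableAt ℝ η t := by
      filter_upwards [hD1Ev] with t ht
      exact ht.sub ((differentiableAt_pow 2).const_mul _)
    have hη0 : η 0 = 0 := by simp [hη, h1]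
    have hderivη : ∀ᶠ t in 𝓝 (0:ℝ), deriv η t = iteratedDeriv 2 ψ t - a3 * t := by
      filter_upwards [hD1Ev] with t ht
      rw [hη, deriv_fun_sub ht ((differentiableAt_pow 2).const_mul _),
        deriv_const_mul _ (differentiableAt_pow 2), deriv_pow_field, hfun2]
      ring
    have hEEq3 : (fun t : ℝ => iteratedDeriv 2 ψ t - a3 * t) =ᶠ[𝓝 (0:ℝ)] deriv η := by
      filter_upwards [hderivη] with t ht using ht.symm
    have hηo : η =o[𝓝 (0:ℝ)] fun t : ℝ => |t| ^ 2 :=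
      littleo_step hηd hη0 (hlo3.congr' hEEq3 EventuallyEq.rfl)
    set χ : ℝ → ℝ := fun t => ψ t - a3 / 6 * t ^ 3 with hχ
    have hχd : ∀ᶠ t in 𝓝 (0:ℝ), DifferentiableAt ℝ χ t := by
      filter_upwards [hψdiffEv] with t ht
      exact ht.sub ((differentiableAt_pow 3).const_mul _)
    have hχ0 : χ 0 = 0 := by simp [hχ, h00]
    have hderivχ : ∀ᶠ t in 𝓝 (0:ℝ), deriv χ t = η t := by
      filter_upwards [hψdiffEv] with t ht
      rw [hχ, deriv_fun_sub ht ((differentiableAt_pow 3).const_mul _),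
        deriv_const_mul _ (differentiableAt_pow 3), deriv_pow_field, hη]
      ring
    have hEEqχ : η =ᶠ[𝓝 (0:ℝ)] deriv χ := by
      filter_upwards [hderivχ] with t ht using ht.symm
    have hχo : χ =o[𝓝 (0:ℝ)] fun t : ℝ => |t| ^ 3 :=
      littleo_step hχd hχ0 (hηo.congr' hEEqχ EventuallyEq.rfl)
    have hχo' : χ =o[𝓝 (0:ℝ)] fun t : ℝ => t ^ 3 := by
      rw [abs_pow_eq_norm_pow] at hχo
      exact (isLittleO_norm_right (g' := fun t : ℝ => t ^ 3)).1 hχo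
    have hψo : ψ =o[𝓝 (0:ℝ)] fun t : ℝ => t ^ 3 :=
      h.trans_isLittleO (isLittleO_pow_pow (by norm_num))
    have : (fun t : ℝ => a3 / 6 * t ^ 3) =o[𝓝 (0:ℝ)] fun t : ℝ => t ^ 3 := by
      have := hψo.sub hχo'
      refine this.congr (fun t => by simp only [hχ]; ring) (fun t => rfl)
    have := coeff_zero_of_isLittleO this
    linarith
  -- final bootstrap
  have hb4 : iteratedDeriv 4 ψ =O[𝓝 (0:ℝ)] fun t : ℝ => |t| ^ 0 := by
    rw [isBigO_iff]
    refine ⟨|iteratedDeriv 4 ψ 0| + 1, ?_⟩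
    have := Metric.tendsto_nhds.1 hCont4 1 one_pos
    filter_upwards [this] with t ht
    rw [Real.dist_eq] at ht
    simp only [Real.norm_eq_abs, pow_zero, abs_one, mul_one]
    have := abs_sub_abs_le_abs_sub (iteratedDeriv 4 ψ t) (iteratedDeriv 4 ψ 0)
    linarith
  have hO3 : iteratedDeriv 3 ψ =O[𝓝 (0:ℝ)] fun t : ℝ => |t| ^ 1 := by
    refine bigO_step (hEv 3 (by norm_num)) h3 ?_
    rwa [show (4:ℕ) = 3 + 1 from rfl, iteratedDeriv_succ] at hb4
  have hO2 : iteratedDeriv 2 ψ =O[𝓝 (0:ℝ)] fun t : ℝ => |t| ^ 2 := by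
    refine bigO_step (hEv 2 (by norm_num)) h2' ?_
    rwa [show (3:ℕ) = 2 + 1 from rfl, iteratedDeriv_succ] at hO3
  have hO1 : deriv ψ =O[𝓝 (0:ℝ)] fun t : ℝ => |t| ^ 3 := by
    refine bigO_step ?_ h1 ?_
    · exact hD1Ev
    · rwa [hfun2] at hO2
  rw [abs_pow_eq_norm_pow] at hO1
  exact (isBigO_norm_right (g' := fun t : ℝ => t ^ 3)).1 hO1


lemma gradAxis_quadric {m : ℕ} (c d : Fin m → ℝ) (A : Matrix (Fin m) (Fin m) ℝ) (x₁ : ℝ) :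
    gradAxis (fun v : ℝ × (Fin m → ℝ) =>
        (v.1 ^ 2 + v.1 * ∑ j, c j * v.2 j + A.mulVec v.2 ⬝ᵥ v.2) /
          (1 + ∑ j, d j * v.2 j)) x₁
      = (2 * x₁, fun j => c j * x₁ - d j * x₁ ^ 2) := by
  unfold gradAxis
  refine Prod.ext ?_ ?_
  · show deriv (fun t : ℝ =>
      (t ^ 2 + t * ∑ j, c j * (0 : Fin m → ℝ) j + A.mulVec 0 ⬝ᵥ (0 : Fin m → ℝ)) /
        (1 + ∑ j, d j * (0 : Fin m → ℝ) j)) x₁ = 2 * x₁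
    have : (fun t : ℝ =>
        (t ^ 2 + t * ∑ j, c j * (0 : Fin m → ℝ) j + A.mulVec 0 ⬝ᵥ (0 : Fin m → ℝ)) /
          (1 + ∑ j, d j * (0 : Fin m → ℝ) j)) = fun t : ℝ => t ^ 2 := by
      funext t
      simp
    rw [this, deriv_pow_field]
    norm_num
  · funext j
    show deriv (fun τ : ℝ =>
      (x₁ ^ 2 + x₁ * ∑ k, c k * (Pi.single j τ : Fin m → ℝ) k +
          A.mulVec (Pi.single j τ) ⬝ᵥ (Pi.single j τ : Fin m → ℝ)) /
        (1 + ∑ k, d k * (Pi.single j τ : Fin m → ℝ) k)) 0 = c j * x₁ - d j * x₁ ^ 2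
    have hfun : (fun τ : ℝ =>
        (x₁ ^ 2 + x₁ * ∑ k, c k * (Pi.single j τ : Fin m → ℝ) k +
            A.mulVec (Pi.single j τ) ⬝ᵥ (Pi.single j τ : Fin m → ℝ)) /
          (1 + ∑ k, d k * (Pi.single j τ : Fin m → ℝ) k))
        = fun τ : ℝ => (x₁ ^ 2 + x₁ * (c j * τ) + A j j * τ * τ) / (1 + d j * τ) := by
      funext τ
      have h1 : ∑ k, c k * (Pi.single j τ : Fin m → ℝ) k = c j * τ := by
        simp [Pi.single_apply, mul_ite, Finset.sum_ite_eq']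
      have h2 : ∑ k, d k * (Pi.single j τ : Fin m → ℝ) k = d j * τ := by
        simp [Pi.single_apply, mul_ite, Finset.sum_ite_eq']
      have h3 : A.mulVec (Pi.single j τ) ⬝ᵥ (Pi.single j τ : Fin m → ℝ)
          = A j j * τ * τ := by
        rw [dotProduct]
        simp only [Pi.single_apply, mul_ite, mul_zero, Finset.sum_ite_eq',
          Finset.mem_univ, if_true]
        rw [mulVec]
        simp [dotProduct, Pi.single_apply, mul_ite, Finset.sum_ite_eq']
      rw [h1, h2, h3]
    rw [hfun]
    have hnum : HasDerivAt (fun τ : ℝ => x₁ ^ 2 + x₁ * (c j * τ) + A j j * τ * τ)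
        (x₁ * c j) 0 := by
      have ha : HasDerivAt (fun τ : ℝ => x₁ ^ 2 + x₁ * (c j * τ) + A j j * τ * τ)
          (0 + x₁ * (c j * 1) + (A j j * 1 * 0 + A j j * 0 * 1)) 0 := by
        exact ((hasDerivAt_const 0 (x₁ ^ 2)).add
          (((hasDerivAt_id 0).const_mul (c j)).const_mul x₁)).add
          ((((hasDerivAt_id 0).const_mul (A j j)).mul (hasDerivAt_id 0)))
      simpa using ha
    have hden : HasDerivAt (fun τ : ℝ => 1 + d j * τ) (d j) 0 := by
      have := (hasDerivAt_const (0:ℝ) (1:ℝ)).add (((hasDerivAt_id 0).const_mul (d j)))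
      rw [zero_add, mul_one] at this; exact this
    have hne : (1 : ℝ) + d j * 0 ≠ 0 := by norm_num
    have hdiv := hnum.div hden (by simpa using hne)
    rw [show deriv (fun τ : ℝ => (x₁ ^ 2 + x₁ * (c j * τ) + A j j * τ * τ) / (1 + d j * τ)) 0 = _ from hdiv.deriv]
    simp
    ring

end Helpers

/-- Let `f(x₁,x̂) = x₁² + x₁ Σ c_j x_j + ⟨A x̂, x̂⟩ + (terms of order ≥ 3 with no x₁³ term)`
be `C⁶`, and let `s_j` be the Taylor coefficient of `f` at `x₁² x_j` (encoded by the
asymptotics of the partial derivatives of `f` along the `x₁`-axis). Among the quadrics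
`Γ_d = {xₙ = (x₁² + x₁ Σ c_j x_j + ⟨A x̂, x̂⟩)/(1 + Σ d_j x_j)}` tangent to the graph of `f`
at the origin to second order and containing the parabola `{xₙ = x₁², x̂ = 0}`, there is a
unique choice of `d`, namely `d_j = -s_j`, for which the unit normal fields of the graph of
`f` and of `Γ_d` along the `x₁`-axis sections agree to second order in `x₁`
(difference `O(x₁³)`). -/
theorem osculating_quadric_unique
    {m : ℕ} (c s : Fin m → ℝ) (A : Matrix (Fin m) (Fin m) ℝ) (hA : A.IsSymm)
    (f : ℝ × (Fin m → ℝ) → ℝ) (hf : ContDiffAt ℝ 6 f (0, 0))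
    (hquad : (fun v : ℝ × (Fin m → ℝ) =>
        f v - (v.1 ^ 2 + v.1 * ∑ j, c j * v.2 j + A.mulVec v.2 ⬝ᵥ v.2))
      =o[𝓝 (0, 0)] fun v => ‖v‖ ^ 2)
    (hax : (fun x₁ : ℝ => f (x₁, 0) - x₁ ^ 2) =O[𝓝 0] fun x₁ => x₁ ^ 4)
    (hs : ∀ j, (fun x₁ : ℝ => deriv (fun τ => f (x₁, Pi.single j τ)) 0
        - (c j * x₁ + s j * x₁ ^ 2)) =O[𝓝 0] fun x₁ => x₁ ^ 3)
    (d : Fin m → ℝ) :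
    ((fun x₁ : ℝ => normalAxis f x₁ -
        normalAxis (fun v =>
          (v.1 ^ 2 + v.1 * ∑ j, c j * v.2 j + A.mulVec v.2 ⬝ᵥ v.2) /
            (1 + ∑ j, d j * v.2 j)) x₁)
      =O[𝓝 0] fun x₁ => x₁ ^ 3) ↔ d = fun j => -(s j) := by
  classical
  set P : ℝ → ℝ × (Fin m → ℝ) := gradAxis f with hP
  set Q : ℝ → ℝ × (Fin m → ℝ) := fun x₁ => (2 * x₁, fun j => c j * x₁ - d j * x₁ ^ 2)
    with hQdef
  have hgrad : ∀ x₁ : ℝ, gradAxis (fun v : ℝ × (Fin m → ℝ) =>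
      (v.1 ^ 2 + v.1 * ∑ j, c j * v.2 j + A.mulVec v.2 ⬝ᵥ v.2) /
        (1 + ∑ j, d j * v.2 j)) x₁ = Q x₁ := fun x₁ => gradAxis_quadric c d A x₁
  -- asymptotics of the first component of `gradAxis f`
  have hφ : ContDiffAt ℝ 6 (fun t : ℝ => f (t, 0)) 0 := by
    have hin : ContDiffAt ℝ 6 (fun t : ℝ => ((t, 0) : ℝ × (Fin m → ℝ))) 0 :=
      contDiffAt_id.prodMk contDiffAt_const
    exact ContDiffAt.comp (g := f) (f := fun t : ℝ => ((t, 0) : ℝ × (Fin m → ℝ))) 0 hf hin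
  have hψC : ContDiffAt ℝ 4 (fun t : ℝ => f (t, 0) - t ^ 2) 0 :=
    (hφ.sub (contDiffAt_id.pow 2)).of_le (by norm_num)
  have hkey := key_aux hψC hax
  have hφdiffEv : ∀ᶠ t in 𝓝 (0:ℝ), DifferentiableAt ℝ (fun t : ℝ => f (t, 0)) t := by
    filter_upwards [hφ.eventually (by simp)] with t ht
    exact ht.differentiableAt (by norm_num)
  have e1 : (fun x : ℝ => (P x).1 - 2 * x) =O[𝓝 (0:ℝ)] fun x => x ^ 3 := by
    have hEq : (deriv fun t : ℝ => f (t, 0) - t ^ 2) =ᶠ[𝓝 (0:ℝ)]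
        fun t => (P t).1 - 2 * t := by
      filter_upwards [hφdiffEv] with t ht
      rw [deriv_fun_sub ht (differentiableAt_pow 2), deriv_pow_field]
      simp [hP, gradAxis]
    exact hkey.congr' hEq EventuallyEq.rfl
  have e2 : ∀ j, (fun x : ℝ => (P x).2 j - (c j * x + s j * x ^ 2))
      =O[𝓝 (0:ℝ)] fun x => x ^ 3 := fun j => by
    simpa [hP, gradAxis] using hs j
  -- power comparisons
  have hp31 : (fun x : ℝ => x ^ 3) =O[𝓝 (0:ℝ)] fun x => x ^ 1 :=
    (isLittleO_pow_pow (by norm_num)).isBigO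
  have hp32 : (fun x : ℝ => x ^ 3) =O[𝓝 (0:ℝ)] fun x => x ^ 2 :=
    (isLittleO_pow_pow (by norm_num)).isBigO
  have hp21 : (fun x : ℝ => x ^ 2) =O[𝓝 (0:ℝ)] fun x => x ^ 1 :=
    (isLittleO_pow_pow (by norm_num)).isBigO
  have hxO1 : (fun x : ℝ => x ^ 1) =O[𝓝 (0:ℝ)] (fun _ => (1:ℝ)) := by
    have : (fun x : ℝ => x ^ 1) =o[𝓝 (0:ℝ)] (fun _ => (1:ℝ)) :=
      (isLittleO_one_iff ℝ).2 (by simp only [pow_one]; exact tendsto_id)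
    exact this.isBigO
  -- componentwise gradient differences
  have hPQ1 : (fun x : ℝ => (P x).1 - (Q x).1) =O[𝓝 (0:ℝ)] fun x => x ^ 3 := e1
  have hPQ2 : ∀ j, (fun x : ℝ => (P x).2 j - (Q x).2 j - (s j + d j) * x ^ 2)
      =O[𝓝 (0:ℝ)] fun x => x ^ 3 := fun j =>
    (e2 j).congr (fun x => by simp only [hQdef]; ring) (fun _ => rfl)
  have hPQ2' : ∀ j, (fun x : ℝ => (P x).2 j - (Q x).2 j) =O[𝓝 (0:ℝ)] fun x => x ^ 2 :=
    fun j => (((hPQ2 j).trans hp32).add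
      ((isBigO_refl (fun x : ℝ => x ^ 2) _).const_mul_left (s j + d j))).congr
      (fun x => by ring) (fun _ => by ring)
  -- O(x) bounds for the gradients themselves
  have hP1x : (fun x : ℝ => (P x).1) =O[𝓝 (0:ℝ)] fun x => x ^ 1 :=
    ((e1.trans hp31).add
      ((isBigO_refl (fun x : ℝ => x ^ 1) _).const_mul_left 2)).congr
      (fun x => by ring) (fun _ => by ring)
  have hQ1x : (fun x : ℝ => (Q x).1) =O[𝓝 (0:ℝ)] fun x => x ^ 1 :=
    ((isBigO_refl (fun x : ℝ => x ^ 1) _).const_mul_left 2).congr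
      (fun x => by simp [hQdef]) (fun _ => rfl)
  have hpoly : ∀ (a b : ℝ), (fun x : ℝ => a * x + b * x ^ 2) =O[𝓝 (0:ℝ)] fun x => x ^ 1 :=
    fun a b => (((isBigO_refl (fun x : ℝ => x ^ 1) _).const_mul_left a).add
      ((hp21.const_mul_left b))).congr (fun x => by ring) (fun _ => by ring)
  have hP2x : ∀ j, (fun x : ℝ => (P x).2 j) =O[𝓝 (0:ℝ)] fun x => x ^ 1 := fun j =>
    (((e2 j).trans hp31).add (hpoly (c j) (s j))).congr
      (fun x => by ring) (fun _ => by ring)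
  have hQ2x : ∀ j, (fun x : ℝ => (Q x).2 j) =O[𝓝 (0:ℝ)] fun x => x ^ 1 := fun j =>
    (hpoly (c j) (-(d j))).congr (fun x => by simp [hQdef]; ring) (fun _ => rfl)
  -- the normalizing factors
  set Sf : ℝ → ℝ := fun x => 1 + (P x).1 ^ 2 + ∑ j, (P x).2 j ^ 2 with hSfdef
  set Sg : ℝ → ℝ := fun x => 1 + (Q x).1 ^ 2 + ∑ j, (Q x).2 j ^ 2 with hSgdef
  set ρf : ℝ → ℝ := fun x => Real.sqrt (Sf x) with hρfdef
  set ρg : ℝ → ℝ := fun x => Real.sqrt (Sg x) with hρgdef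
  have hSf1 : ∀ x, 1 ≤ Sf x := by
    intro x
    have h1 : 0 ≤ (P x).1 ^ 2 := sq_nonneg _
    have h2 : 0 ≤ ∑ j, (P x).2 j ^ 2 := Finset.sum_nonneg fun j _ => sq_nonneg _
    simp only [hSfdef]; linarith
  have hSg1 : ∀ x, 1 ≤ Sg x := by
    intro x
    have h1 : 0 ≤ (Q x).1 ^ 2 := sq_nonneg _
    have h2 : 0 ≤ ∑ j, (Q x).2 j ^ 2 := Finset.sum_nonneg fun j _ => sq_nonneg _
    show (1:ℝ) ≤ 1 + (Q x).1 ^ 2 + ∑ j, (Q x).2 j ^ 2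
    linarith
  have hρf1 : ∀ x, 1 ≤ ρf x := fun x => by
    have := Real.sqrt_le_sqrt (hSf1 x)
    rwa [Real.sqrt_one] at this
  have hρg1 : ∀ x, 1 ≤ ρg x := fun x => by
    have := Real.sqrt_le_sqrt (hSg1 x)
    rwa [Real.sqrt_one] at this
  have hρfsq : ∀ x, ρf x ^ 2 = Sf x := fun x => Real.sq_sqrt (by linarith [hSf1 x])
  have hρgsq : ∀ x, ρg x ^ 2 = Sg x := fun x => Real.sq_sqrt (by linarith [hSg1 x])
  -- difference of the squares of the normalizing factors
  have hSdiff : (fun x => Sf x - Sg x) =O[𝓝 (0:ℝ)] fun x => x ^ 3 := by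
    have hterm1 : (fun x : ℝ => (P x).1 ^ 2 - (Q x).1 ^ 2) =O[𝓝 (0:ℝ)] fun x => x ^ 3 := by
      have hsum : (fun x : ℝ => (P x).1 + (Q x).1) =O[𝓝 (0:ℝ)] (fun _ => (1:ℝ)) :=
        (hP1x.trans hxO1).add (hQ1x.trans hxO1)
      exact (hPQ1.mul hsum).congr (fun x => by ring) (fun x => by ring)
    have hterm2 : (fun x : ℝ => ∑ j, ((P x).2 j ^ 2 - (Q x).2 j ^ 2))
        =O[𝓝 (0:ℝ)] fun x => x ^ 3 := by
      refine IsBigO.fun_sum fun j _ => ?_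
      have hsum : (fun x : ℝ => (P x).2 j + (Q x).2 j) =O[𝓝 (0:ℝ)] fun x => x ^ 1 :=
        (hP2x j).add (hQ2x j)
      exact ((hPQ2' j).mul hsum).congr (fun x => by ring) (fun x => by ring)
    exact (hterm1.add hterm2).congr
      (fun x => by simp only [hSfdef, hSgdef, Finset.sum_sub_distrib]; ring)
      (fun x => by ring)
  -- difference of the normalizing factors
  have hρdiff : (fun x => ρf x - ρg x) =O[𝓝 (0:ℝ)] fun x => x ^ 3 := by
    refine IsBigO.trans ?_ hSdiff
    refine IsBigO.of_bound 1 (Eventually.of_forall fun x => ?_)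
    have hk : (ρf x - ρg x) * (ρf x + ρg x) = Sf x - Sg x := by
      nlinarith [hρfsq x, hρgsq x]
    have hge : (1:ℝ) ≤ ρf x + ρg x := by linarith [hρf1 x, hρg1 x]
    calc ‖ρf x - ρg x‖ = |ρf x - ρg x| := rfl
      _ ≤ |ρf x - ρg x| * (ρf x + ρg x) :=
        le_mul_of_one_le_right (abs_nonneg _) hge
      _ = |(ρf x - ρg x) * (ρf x + ρg x)| := by
        rw [abs_mul, abs_of_nonneg (by linarith : (0:ℝ) ≤ ρf x + ρg x)]
      _ = 1 * ‖Sf x - Sg x‖ := by rw [hk, one_mul]; rfl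
  have hρfne : ∀ x, ρf x ≠ 0 := fun x => by linarith [hρf1 x]
  have hρgne : ∀ x, ρg x ≠ 0 := fun x => by linarith [hρg1 x]
  -- difference of the inverses
  have hinvdiff : (fun x => (ρf x)⁻¹ - (ρg x)⁻¹) =O[𝓝 (0:ℝ)] fun x => x ^ 3 := by
    refine IsBigO.trans ?_ hρdiff
    refine IsBigO.of_bound 1 (Eventually.of_forall fun x => ?_)
    have hk : (ρf x)⁻¹ - (ρg x)⁻¹ = (ρg x - ρf x) * ((ρf x)⁻¹ * (ρg x)⁻¹) := by
      rw [inv_sub_inv (hρfne x) (hρgne x)]; ring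
    have hf1 : (ρf x)⁻¹ ≤ 1 := inv_le_one_of_one_le₀ (hρf1 x)
    have hg1 : (ρg x)⁻¹ ≤ 1 := inv_le_one_of_one_le₀ (hρg1 x)
    have hf0 : 0 ≤ (ρf x)⁻¹ := inv_nonneg.2 (by linarith [hρf1 x])
    have hg0 : 0 ≤ (ρg x)⁻¹ := inv_nonneg.2 (by linarith [hρg1 x])
    calc ‖(ρf x)⁻¹ - (ρg x)⁻¹‖ = |ρg x - ρf x| * |(ρf x)⁻¹ * (ρg x)⁻¹| := by
          rw [Real.norm_eq_abs, hk, abs_mul]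
      _ ≤ |ρg x - ρf x| * 1 := by
          apply mul_le_mul_of_nonneg_left _ (abs_nonneg _)
          rw [abs_of_nonneg (mul_nonneg hf0 hg0)]
          calc (ρf x)⁻¹ * (ρg x)⁻¹ ≤ 1 * 1 := mul_le_mul hf1 hg1 hg0 zero_le_one
            _ = 1 := one_mul 1
      _ = 1 * ‖ρf x - ρg x‖ := by rw [mul_one, one_mul, Real.norm_eq_abs, abs_sub_comm]
  -- boundedness of the normalizing factors
  have hxtend : Tendsto (fun x : ℝ => x ^ 1) (𝓝 (0:ℝ)) (𝓝 0) := by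
    simp only [pow_one]; exact tendsto_id
  have hP1tend : Tendsto (fun x => (P x).1) (𝓝 (0:ℝ)) (𝓝 0) :=
    hP1x.trans_tendsto hxtend
  have hP2tend : ∀ j, Tendsto (fun x => (P x).2 j) (𝓝 (0:ℝ)) (𝓝 0) := fun j =>
    (hP2x j).trans_tendsto hxtend
  have hSftend : Tendsto Sf (𝓝 (0:ℝ)) (𝓝 1) := by
    have h1 : Tendsto (fun x => (P x).1 ^ 2) (𝓝 (0:ℝ)) (𝓝 0) := by
      simpa using hP1tend.pow 2
    have h2 : Tendsto (fun x => ∑ j, (P x).2 j ^ 2) (𝓝 (0:ℝ)) (𝓝 0) := by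
      have := tendsto_finset_sum (Finset.univ : Finset (Fin m))
        (f := fun j (x : ℝ) => (P x).2 j ^ 2) (a := fun _ => (0:ℝ))
        (fun j _ => by simpa using (hP2tend j).pow 2)
      simpa using this
    have := (tendsto_const_nhds (x := (1:ℝ)) (f := 𝓝 (0:ℝ))).add (h1.add h2)
    simp only [add_zero] at this
    simpa [hSfdef, add_assoc] using this
  have hSfO1 : Sf =O[𝓝 (0:ℝ)] (fun _ => (1:ℝ)) := hSftend.isBigO_one ℝ
  have hρfO1 : ρf =O[𝓝 (0:ℝ)] (fun _ => (1:ℝ)) := by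
    refine IsBigO.trans ?_ hSfO1
    refine IsBigO.of_bound 1 (Eventually.of_forall fun x => ?_)
    have h1 : ρf x ≤ Sf x := by nlinarith [hρfsq x, hρf1 x]
    have h2 : 0 ≤ ρf x := by linarith [hρf1 x]
    rw [Real.norm_eq_abs, Real.norm_eq_abs, abs_of_nonneg h2,
      abs_of_nonneg (by linarith [hSf1 x] : (0:ℝ) ≤ Sf x), one_mul]
    exact h1
  have hρfinvO1 : (fun x => (ρf x)⁻¹) =O[𝓝 (0:ℝ)] (fun _ => (1:ℝ)) := by
    refine IsBigO.of_bound 1 (Eventually.of_forall fun x => ?_)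
    have hf1 : (ρf x)⁻¹ ≤ 1 := inv_le_one_of_one_le₀ (hρf1 x)
    have hf0 : 0 ≤ (ρf x)⁻¹ := inv_nonneg.2 (by linarith [hρf1 x])
    rw [Real.norm_eq_abs, abs_of_nonneg hf0]
    simpa using hf1
  -- the vector (Q, -1) is bounded
  have hQcont : Continuous Q := by
    rw [hQdef]
    refine Continuous.prodMk (by fun_prop) ?_
    exact continuous_pi fun j => by fun_prop
  have hQO1 : (fun x => ((Q x, -1) : (ℝ × (Fin m → ℝ)) × ℝ))
      =O[𝓝 (0:ℝ)] (fun _ => (1:ℝ)) :=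
    (((hQcont.tendsto 0).prodMk_nhds tendsto_const_nhds).isBigO_one ℝ)
  -- the normals
  have hNf : ∀ x, normalAxis f x
      = (ρf x)⁻¹ • ((P x, -1) : (ℝ × (Fin m → ℝ)) × ℝ) := fun x => rfl
  have hNg : ∀ x, normalAxis (fun v : ℝ × (Fin m → ℝ) =>
      (v.1 ^ 2 + v.1 * ∑ j, c j * v.2 j + A.mulVec v.2 ⬝ᵥ v.2) /
        (1 + ∑ j, d j * v.2 j)) x
      = (ρg x)⁻¹ • ((Q x, -1) : (ℝ × (Fin m → ℝ)) × ℝ) := by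
    intro x
    unfold normalAxis
    rw [hgrad x]
  set T : ℝ → (ℝ × (Fin m → ℝ)) × ℝ :=
    fun x => (ρf x)⁻¹ • ((P x - Q x, 0) : (ℝ × (Fin m → ℝ)) × ℝ) with hT
  have hsplit : ∀ x, normalAxis f x - normalAxis (fun v : ℝ × (Fin m → ℝ) =>
      (v.1 ^ 2 + v.1 * ∑ j, c j * v.2 j + A.mulVec v.2 ⬝ᵥ v.2) /
        (1 + ∑ j, d j * v.2 j)) x
      = T x + ((ρf x)⁻¹ - (ρg x)⁻¹) • ((Q x, -1) : (ℝ × (Fin m → ℝ)) × ℝ) := by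
    intro x
    rw [hNf x, hNg x]
    simp only [hT]
    have huv : ((P x - Q x, (0:ℝ)) : (ℝ × (Fin m → ℝ)) × ℝ)
        = (P x, -1) - (Q x, -1) := by
      refine Prod.ext ?_ ?_
      · show P x - Q x = ((P x, (-1:ℝ)) - (Q x, (-1:ℝ))).1
        rw [Prod.fst_sub]
      · show (0:ℝ) = ((P x, (-1:ℝ)) - (Q x, (-1:ℝ))).2
        rw [Prod.snd_sub]
        norm_num
    rw [huv]
    module
  have hterm2O : (fun x => ((ρf x)⁻¹ - (ρg x)⁻¹) •
      ((Q x, -1) : (ℝ × (Fin m → ℝ)) × ℝ)) =O[𝓝 (0:ℝ)] fun x => x ^ 3 :=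
    (hinvdiff.smul hQO1).congr (fun x => rfl) (fun x => by simp)
  -- the chain of equivalences
  have hiff1 : ((fun x₁ : ℝ => normalAxis f x₁ -
        normalAxis (fun v : ℝ × (Fin m → ℝ) =>
          (v.1 ^ 2 + v.1 * ∑ j, c j * v.2 j + A.mulVec v.2 ⬝ᵥ v.2) /
            (1 + ∑ j, d j * v.2 j)) x₁) =O[𝓝 (0:ℝ)] fun x => x ^ 3)
      ↔ T =O[𝓝 (0:ℝ)] fun x => x ^ 3 := by
    constructor
    · intro h
      exact (h.sub hterm2O).congr
        (fun x => by rw [hsplit x]; abel) (fun _ => rfl)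
    · intro h
      exact (h.add hterm2O).congr (fun x => (hsplit x).symm) (fun _ => rfl)
  have hiff2 : (T =O[𝓝 (0:ℝ)] fun x => x ^ 3)
      ↔ (fun x => P x - Q x) =O[𝓝 (0:ℝ)] fun x => x ^ 3 := by
    constructor
    · intro h
      have h2 := (hρfO1.smul h).congr (fun x => rfl) (fun x : ℝ => one_smul ℝ (x ^ 3))
      have h3 : (fun x => ((P x - Q x, (0:ℝ)) : (ℝ × (Fin m → ℝ)) × ℝ))
          =O[𝓝 (0:ℝ)] fun x => x ^ 3 := by
        refine h2.congr (fun x => ?_) (fun _ => rfl)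
        rw [hT, smul_smul, mul_inv_cancel₀ (hρfne x), one_smul]
      exact h3.prod_left_fst
    · intro h
      have h0 : (fun x => ((P x - Q x, (0:ℝ)) : (ℝ × (Fin m → ℝ)) × ℝ))
          =O[𝓝 (0:ℝ)] fun x => x ^ 3 := h.prod_left (isBigO_zero _ _)
      exact (hρfinvO1.smul h0).congr (fun x => rfl) (fun x : ℝ => one_smul ℝ (x ^ 3))
  have hiff3 : ((fun x => P x - Q x) =O[𝓝 (0:ℝ)] fun x => x ^ 3)
      ↔ ∀ j, s j + d j = 0 := by
    constructor
    · intro h j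
      have hsnd : (fun x => (P x - Q x).2) =O[𝓝 (0:ℝ)] fun x => x ^ 3 := by
        refine IsBigO.trans ?_ h
        exact IsBigO.of_bound 1 (Eventually.of_forall fun x => by
          rw [one_mul]; exact norm_snd_le _)
      have hj : (fun x => (P x).2 j - (Q x).2 j) =O[𝓝 (0:ℝ)] fun x => x ^ 3 := by
        have := (isBigO_pi.1 hsnd) j
        simpa using this
      have hc : (fun x : ℝ => (s j + d j) * x ^ 2) =O[𝓝 (0:ℝ)] fun x => x ^ 3 :=
        (hj.sub (hPQ2 j)).congr (fun x => by ring) (fun _ => rfl)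
      exact coeff_zero_of_isBigO hc
    · intro hall
      have hsnd : ∀ j, (fun x => (P x).2 j - (Q x).2 j) =O[𝓝 (0:ℝ)] fun x => x ^ 3 :=
        fun j => (hPQ2 j).congr (fun x => by rw [hall j]; ring) (fun _ => rfl)
      have h2 : (fun x => (P x).2 - (Q x).2) =O[𝓝 (0:ℝ)] fun x => x ^ 3 :=
        isBigO_pi.2 fun j => by simpa using hsnd j
      have := hPQ1.prod_left h2
      exact this.congr (fun x => rfl) (fun _ => rfl)
  rw [hiff1, hiff2, hiff3]
  constructor
  · intro hall
    funext j
    have := hall j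
    linarith
  · intro hd j
    rw [hd]
    ring
end

section
/- Suppose f and g are C¹ germs at a common fixed point O in ℝᵐ that are liftings of projective involutions with common fixed hyperplane H through O, with distinct second fixed points P_f ≠ P_g such that the lines Λ_f(0) and Λ_g(0) joining O to P_f and P_g are distinct. Then along any C¹ curve v(x) through O transversal to H with z(v(x)) ≃ x, the difference g(v(x)) - f(v(x)) is of exact order x (in particular not O(x³)). -/
open Filter Topology Asymptotics

/-- Let `f`, `g` be the liftings, in the affine chart `(z, y) ∈ ℝ × ℝᵏ` with common fixed
hyperplane `H = {z = 0}`, of the projective involutions with second fixed points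
`P_f = (p_f, w_f)`, `P_g = (p_g, w_g)` (the general form of such an involution is
`(z, y) ↦ (1 - (2/p) z)⁻¹ • (-z, y - ((2/p) z) • w)`). If the lines `Λ_f(0)`, `Λ_g(0)`
joining the origin `O` to `P_f` and `P_g` are distinct, then along any curve `v(x) → O`
transversal to `H` with `z(v(x)) ≃ x`, the difference `g(v(x)) - f(v(x))` is of exact
order `x` (in particular not `O(x³)`). -/
theorem distinct_fixed_points_first_order_difference
    (k : ℕ) (pf pg : ℝ) (wf wg : Fin k → ℝ) (hpf : pf ≠ 0) (hpg : pg ≠ 0)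
    (hlines : ¬ ∃ t : ℝ, ((pg, wg) : ℝ × (Fin k → ℝ)) = t • ((pf, wf) : ℝ × (Fin k → ℝ)))
    (v : ℝ → ℝ × (Fin k → ℝ))
    (hv0 : Tendsto v (𝓝[≠] 0) (𝓝 0))
    (hvz : Tendsto (fun x => (v x).1 / x) (𝓝[≠] 0) (𝓝 1)) :
    (fun x =>
        ((1 - (2 / pg) * (v x).1)⁻¹ •
            (((-(v x).1 : ℝ), (v x).2 - ((2 / pg) * (v x).1) • wg) : ℝ × (Fin k → ℝ)) -
          (1 - (2 / pf) * (v x).1)⁻¹ •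
            (((-(v x).1 : ℝ), (v x).2 - ((2 / pf) * (v x).1) • wf) : ℝ × (Fin k → ℝ))))
      =Θ[𝓝[≠] 0] fun x => x := by
  set l : Filter ℝ := 𝓝[≠] (0 : ℝ) with hl
  set a : ℝ := 2 / pf with ha
  set b : ℝ := 2 / pg with hb
  set c : Fin k → ℝ := a • wf - b • wg with hc
  set D : ℝ → ℝ × (Fin k → ℝ) := fun x =>
      ((1 - b * (v x).1)⁻¹ •
          (((-(v x).1 : ℝ), (v x).2 - (b * (v x).1) • wg) : ℝ × (Fin k → ℝ)) -
        (1 - a * (v x).1)⁻¹ •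
          (((-(v x).1 : ℝ), (v x).2 - (a * (v x).1) • wf) : ℝ × (Fin k → ℝ))) with hD
  -- the limit direction is nonzero
  have hcne : c ≠ 0 := by
    intro h
    apply hlines
    refine ⟨pg / pf, ?_⟩
    have h' : a • wf = b • wg := by rwa [hc, sub_eq_zero] at h
    have hw : wg = (pg / pf) • wf := by
      funext i
      have := congrFun h' i
      simp only [Pi.smul_apply, smul_eq_mul, ha, hb] at this ⊢
      field_simp at this ⊢
      linarith
    rw [Prod.smul_mk, Prod.mk.injEq]
    constructor
    · exact (div_mul_cancel₀ pg hpf).symm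
    · exact hw
  have hx_ne : ∀ᶠ x in l, x ≠ 0 := self_mem_nhdsWithin
  have hz : Tendsto (fun x => (v x).1) l (𝓝 0) := by
    have := (continuous_fst.tendsto (0 : ℝ × (Fin k → ℝ))).comp hv0
    simpa [Function.comp_def] using this
  have hy : Tendsto (fun x => (v x).2) l (𝓝 0) := by
    have := (continuous_snd.tendsto (0 : ℝ × (Fin k → ℝ))).comp hv0
    simpa [Function.comp_def] using this
  have hA : Tendsto (fun x => 1 - a * (v x).1) l (𝓝 1) := by
    have := (tendsto_const_nhds (x := (1:ℝ))).sub (hz.const_mul a)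
    simpa using this
  have hB : Tendsto (fun x => 1 - b * (v x).1) l (𝓝 1) := by
    have := (tendsto_const_nhds (x := (1:ℝ))).sub (hz.const_mul b)
    simpa using this
  have hAinv : Tendsto (fun x => (1 - a * (v x).1)⁻¹) l (𝓝 1) := by
    have := hA.inv₀ one_ne_zero
    simpa using this
  have hBinv : Tendsto (fun x => (1 - b * (v x).1)⁻¹) l (𝓝 1) := by
    have := hB.inv₀ one_ne_zero
    simpa using this
  have hAne : ∀ᶠ x in l, 1 - a * (v x).1 ≠ 0 := hA.eventually_ne one_ne_zero
  have hBne : ∀ᶠ x in l, 1 - b * (v x).1 ≠ 0 := hB.eventually_ne one_ne_zero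
  -- auxiliary expression with an obvious limit
  set E : ℝ → ℝ × (Fin k → ℝ) := fun x =>
      ((-((v x).1 / x)) * ((1 - b * (v x).1)⁻¹ - (1 - a * (v x).1)⁻¹),
        ((v x).1 / x) • (((b - a) * ((1 - b * (v x).1)⁻¹ * (1 - a * (v x).1)⁻¹)) • (v x).2 +
          ((a * (1 - a * (v x).1)⁻¹) • wf - (b * (1 - b * (v x).1)⁻¹) • wg))) with hE
  have hElim : Tendsto E l (𝓝 ((0 : ℝ), c)) := by
    have h1 : Tendsto (fun x => (-((v x).1 / x)) * ((1 - b * (v x).1)⁻¹ - (1 - a * (v x).1)⁻¹))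
        l (𝓝 ((-1) * (1 - 1))) := (hvz.neg).mul (hBinv.sub hAinv)
    have h2 : Tendsto (fun x =>
        ((v x).1 / x) • (((b - a) * ((1 - b * (v x).1)⁻¹ * (1 - a * (v x).1)⁻¹)) • (v x).2 +
          ((a * (1 - a * (v x).1)⁻¹) • wf - (b * (1 - b * (v x).1)⁻¹) • wg)))
        l (𝓝 ((1 : ℝ) • (((b - a) * (1 * 1)) • (0 : Fin k → ℝ) +
          ((a * 1) • wf - (b * 1) • wg)))) := by
      exact hvz.smul ((((tendsto_const_nhds.mul (hBinv.mul hAinv)).smul hy).add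
        (((tendsto_const_nhds.mul hAinv).smul tendsto_const_nhds).sub
          ((tendsto_const_nhds.mul hBinv).smul tendsto_const_nhds))))
    have key := h1.prodMk_nhds h2
    have h3 : ((((-1 : ℝ)) * (1 - 1)), ((1 : ℝ) • (((b - a) * (1 * 1)) • (0 : Fin k → ℝ) +
        ((a * 1) • wf - (b * 1) • wg)))) = ((0 : ℝ), c) := by
      simp [hc]
    rw [h3] at key
    exact key
  have heq : ∀ᶠ x in l, x⁻¹ • D x = E x := by
    filter_upwards [hx_ne, hAne, hBne] with x hx hAx hBx
    have hfst : x⁻¹ * ((1 - b * (v x).1)⁻¹ * (-(v x).1) - (1 - a * (v x).1)⁻¹ * (-(v x).1)) =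
        (-((v x).1 / x)) * ((1 - b * (v x).1)⁻¹ - (1 - a * (v x).1)⁻¹) := by
      field_simp
      ring
    have hsnd : x⁻¹ • ((1 - b * (v x).1)⁻¹ • ((v x).2 - (b * (v x).1) • wg) -
        (1 - a * (v x).1)⁻¹ • ((v x).2 - (a * (v x).1) • wf)) =
        ((v x).1 / x) • (((b - a) * ((1 - b * (v x).1)⁻¹ * (1 - a * (v x).1)⁻¹)) • (v x).2 +
          ((a * (1 - a * (v x).1)⁻¹) • wf - (b * (1 - b * (v x).1)⁻¹) • wg)) := by
      funext i
      simp only [Pi.smul_apply, Pi.sub_apply, Pi.add_apply, smul_eq_mul]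
      have hAx' : 1 - (v x).1 * a ≠ 0 := by rwa [mul_comm] at hAx
      have hBx' : 1 - (v x).1 * b ≠ 0 := by rwa [mul_comm] at hBx
      field_simp
      ring
    simp only [hD, hE, Prod.smul_mk, Prod.mk_sub_mk, smul_eq_mul]
    exact Prod.ext hfst hsnd
  have hlim : Tendsto (fun x => x⁻¹ • D x) l (𝓝 ((0 : ℝ), c)) :=
    hElim.congr' (heq.mono fun x hx => hx.symm)
  -- derive the Θ estimate
  set L : ℝ × (Fin k → ℝ) := ((0 : ℝ), c) with hL
  have hLpos : 0 < ‖L‖ := by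
    rw [norm_pos_iff]
    simp [hL, Prod.ext_iff, hcne]
  have hnorm : Tendsto (fun x => ‖x⁻¹ • D x‖) l (𝓝 ‖L‖) := hlim.norm
  have hDsmul : ∀ x : ℝ, x ≠ 0 → ‖D x‖ = ‖x‖ * ‖x⁻¹ • D x‖ := by
    intro x hx
    rw [norm_smul, norm_inv]
    field_simp
  constructor
  · rw [Asymptotics.isBigO_iff]
    refine ⟨‖L‖ + 1, ?_⟩
    filter_upwards [hx_ne, hnorm.eventually_lt_const (by linarith : ‖L‖ < ‖L‖ + 1)]
      with x hx hub
    rw [hDsmul x hx]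
    have h0 : (0 : ℝ) ≤ ‖x‖ := norm_nonneg _
    nlinarith [norm_nonneg (x⁻¹ • D x)]
  · rw [Asymptotics.isBigO_iff]
    refine ⟨2 / ‖L‖, ?_⟩
    filter_upwards [hx_ne, hnorm.eventually_const_lt (by linarith : ‖L‖ / 2 < ‖L‖)]
      with x hx hlb
    have hD' := hDsmul x hx
    have h0 : (0 : ℝ) ≤ ‖x‖ := norm_nonneg _
    rw [div_mul_eq_mul_div, le_div_iff₀ hLpos]
    nlinarith
end
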